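/- arXiv:1504.04217 — 10 statements merged into one kernel-verified Lean document; each statement's English description precedes it below -/
import Mathlib

section
/- For every finite nonempty set A and all nonnegative vectors p, q ∈ ℝ^A, the fidelity F(p,q) equals the maximum of ⟨X, √p√pᵀ⟩ = ∑_{x,x'∈A} X_{x,x'} √(p_x p_{x'}) over all real symmetric positive semidefinite A×A matrices X whose diagonal equals q (i.e. X_{x,x} = q_x for all x); moreover this maximum is attained. -/
open Finset Matrix

open scoped MatrixOrder

/-- Fidelity of two nonnegative vectors. -/
noncomputable def fid {ι : Type} [Fintype ι] (u v : ι → ℝ) : ℝ :=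
  (∑ i, Real.sqrt (u i * v i)) ^ 2

private lemma entry_le_sqrt {A : Type} [Fintype A] [DecidableEq A]
    {X : Matrix A A ℝ} (hX : X.PosSemidef) (i j : A) :
    X i j ≤ Real.sqrt (X i i * X j j) := by
  set S := CFC.sqrt X with hS
  have hSsymm : ∀ a b, S a b = S b a := fun a b => by
    have := (CFC.sqrt_nonneg X).posSemidef.isHermitian.apply a b
    simpa using this.symm
  have hsq : S * S = X := by
    have := CFC.sq_sqrt X hX.nonneg
    rwa [pow_two] at this
  have hXij : X i j = ∑ k, S i k * S j k := by
    rw [← hsq, Matrix.mul_apply]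
    exact Finset.sum_congr rfl fun k _ => by rw [hSsymm k j]
  have hXii : X i i = ∑ k, S i k ^ 2 := by
    rw [← hsq, Matrix.mul_apply]
    exact Finset.sum_congr rfl fun k _ => by rw [hSsymm k i, pow_two]
  have hXjj : X j j = ∑ k, S j k ^ 2 := by
    rw [← hsq, Matrix.mul_apply]
    exact Finset.sum_congr rfl fun k _ => by rw [hSsymm k j, pow_two]
  have hcs : (X i j) ^ 2 ≤ X i i * X j j := by
    rw [hXij, hXii, hXjj]
    exact Finset.sum_mul_sq_le_sq_mul_sq _ _ _
  calc X i j ≤ |X i j| := le_abs_self _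
    _ = Real.sqrt ((X i j) ^ 2) := (Real.sqrt_sq_eq_abs _).symm
    _ ≤ Real.sqrt (X i i * X j j) := Real.sqrt_le_sqrt hcs

/-- The fidelity `F(p,q)` equals the maximum of `⟨X, √p√pᵀ⟩` over all real symmetric
positive semidefinite matrices `X` with diagonal equal to `q`; the maximum is attained. -/
theorem fid_eq_max_sdp (A : Type) [Fintype A] [Nonempty A]
    (p q : A → ℝ) (hp : ∀ x, 0 ≤ p x) (hq : ∀ x, 0 ≤ q x) :
    IsGreatest
      {v : ℝ | ∃ X : Matrix A A ℝ, X.IsSymm ∧ X.PosSemidef ∧ (∀ x, X x x = q x) ∧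
        v = ∑ x, ∑ x', X x x' * Real.sqrt (p x * p x')}
      (fid p q) := by
  classical
  have key : ∀ x x' : A, Real.sqrt (q x * q x') * Real.sqrt (p x * p x')
      = Real.sqrt (p x * q x) * Real.sqrt (p x' * q x') := by
    intro x x'
    rw [Real.sqrt_mul (hq x), Real.sqrt_mul (hp x), Real.sqrt_mul (hp x), Real.sqrt_mul (hp x')]
    ring
  have hsum : ∑ x, ∑ x', Real.sqrt (q x * q x') * Real.sqrt (p x * p x') = fid p q := by
    simp only [key, fid]
    rw [pow_two, Finset.sum_mul]
    exact Finset.sum_congr rfl fun x _ => by rw [Finset.mul_sum]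
  set Y : Matrix A A ℝ := Matrix.of (fun x x' => Real.sqrt (q x) * Real.sqrt (q x')) with hY
  have hYapp : ∀ x x', Y x x' = Real.sqrt (q x) * Real.sqrt (q x') := fun _ _ => rfl
  constructor
  · -- membership: take Y the outer product of √q with itself
    refine ⟨Y, ?_, ?_, ?_, ?_⟩
    · ext x x'
      simp only [Matrix.transpose_apply, hYapp, mul_comm]
    · refine Matrix.PosSemidef.of_dotProduct_mulVec_nonneg ?_ ?_
      · ext x x'
        simp only [Matrix.conjTranspose_apply, hYapp, star_trivial, mul_comm]
      · intro v
        have hQ : dotProduct (star v) (Matrix.mulVec Y v)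
            = (∑ x, Real.sqrt (q x) * v x) ^ 2 := by
          simp only [dotProduct, Matrix.mulVec, dotProduct, star_trivial, hYapp]
          rw [pow_two, Finset.sum_mul]
          refine Finset.sum_congr rfl fun x _ => ?_
          rw [Finset.mul_sum, Finset.mul_sum]
          refine Finset.sum_congr rfl fun x' _ => ?_
          ring
        rw [hQ]
        positivity
    · intro x
      rw [hYapp]
      exact Real.mul_self_sqrt (hq x)
    · rw [← hsum]
      refine Finset.sum_congr rfl fun x _ => Finset.sum_congr rfl fun x' _ => ?_
      rw [hYapp, Real.sqrt_mul (hq x)]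
  · -- upper bound
    rintro v ⟨X, hsymm, hpsd, hdiag, rfl⟩
    rw [← hsum]
    refine Finset.sum_le_sum fun x _ => Finset.sum_le_sum fun x' _ => ?_
    refine mul_le_mul_of_nonneg_right ?_ (Real.sqrt_nonneg _)
    have := entry_le_sqrt hpsd x x'
    rwa [hdiag x, hdiag x'] at this
end

section
/- Let A be a finite nonempty set, p ∈ ℝ^A a nonnegative vector, and y ∈ ℝ^A a vector with y_x > 0 for every x ∈ A. Then the matrix Diag(y) − √p√pᵀ is positive semidefinite if and only if ∑_{x∈A} p_x / y_x ≤ 1. -/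
open Finset

private lemma quad_form_eval (A : Type) [Fintype A] [DecidableEq A]
    (p y : A → ℝ) (hp : ∀ x, 0 ≤ p x) (v : A → ℝ) :
    dotProduct v ((Matrix.diagonal y - Matrix.of fun x x' => Real.sqrt (p x * p x')).mulVec v) =
      ∑ x, y x * v x ^ 2 - (∑ x, Real.sqrt (p x) * v x) ^ 2 := by
  rw [Matrix.sub_mulVec, dotProduct_sub]
  congr 1
  · simp [dotProduct, Matrix.mulVec_diagonal]
    ring_nf
    exact Finset.sum_congr rfl fun x _ => by ring
  · rw [sq, Finset.sum_mul_sum]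
    simp [dotProduct, Matrix.mulVec, Finset.mul_sum]
    refine Finset.sum_congr rfl fun x _ => Finset.sum_congr rfl fun x' _ => ?_
    rw [Real.sqrt_mul (hp x)]
    ring

/-- For a nonnegative vector `p` and a positive vector `y`, the matrix
`Diag(y) − √p√pᵀ` is positive semidefinite iff `∑_x p_x / y_x ≤ 1`. -/
theorem diagonal_sub_sqrtOuter_posSemidef_iff (A : Type) [Fintype A] [Nonempty A]
    [DecidableEq A]
    (p y : A → ℝ) (hp : ∀ x, 0 ≤ p x) (hy : ∀ x, 0 < y x) :
    (Matrix.diagonal y - Matrix.of fun x x' => Real.sqrt (p x * p x')).PosSemidef ↔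
      ∑ x, p x / y x ≤ 1 := by
  constructor
  · intro h
    have h2 := h.dotProduct_mulVec_nonneg (fun x => Real.sqrt (p x) / y x)
    simp only [star_trivial] at h2
    rw [quad_form_eval A p y hp] at h2
    have e1 : ∀ x : A, y x * (Real.sqrt (p x) / y x) ^ 2 = p x / y x := by
      intro x
      have h0 := (hy x).ne'
      rw [div_pow, Real.sq_sqrt (hp x)]
      field_simp
    have e2 : ∀ x : A, Real.sqrt (p x) * (Real.sqrt (p x) / y x) = p x / y x := by
      intro x
      rw [mul_div_assoc', Real.mul_self_sqrt (hp x)]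
    simp only [e1, e2] at h2
    set S := ∑ x, p x / y x with hS
    have hS0 : 0 ≤ S := Finset.sum_nonneg fun x _ => div_nonneg (hp x) (hy x).le
    nlinarith [sq_nonneg (S - 1)]
  · intro hsum
    refine Matrix.posSemidef_iff_dotProduct_mulVec.mpr ⟨?_, ?_⟩
    · refine Matrix.IsHermitian.sub (Matrix.isHermitian_diagonal _) ?_
      ext x x'
      simp [Matrix.conjTranspose_apply, mul_comm]
    · intro v
      simp only [star_trivial]
      rw [quad_form_eval A p y hp]
      have cs := Finset.sum_mul_sq_le_sq_mul_sq Finset.univ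
        (fun x => Real.sqrt (p x / y x)) (fun x => Real.sqrt (y x) * v x)
      have e : ∀ x : A, Real.sqrt (p x / y x) * (Real.sqrt (y x) * v x)
          = Real.sqrt (p x) * v x := by
        intro x
        rw [← mul_assoc, ← Real.sqrt_mul (div_nonneg (hp x) (hy x).le),
          div_mul_cancel₀ _ (hy x).ne']
      simp only [e] at cs
      have e2 : ∀ x : A, Real.sqrt (p x / y x) ^ 2 = p x / y x := fun x =>
        Real.sq_sqrt (div_nonneg (hp x) (hy x).le)
      have e3 : ∀ x : A, (Real.sqrt (y x) * v x) ^ 2 = y x * v x ^ 2 := fun x => by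
        rw [mul_pow, Real.sq_sqrt (hy x).le]
      simp only [e2, e3] at cs
      have hyv : 0 ≤ ∑ x, y x * v x ^ 2 :=
        Finset.sum_nonneg fun x _ => mul_nonneg (hy x).le (sq_nonneg _)
      nlinarith
end

section
/- For every finite nonempty set A and all nonnegative vectors p, q ∈ ℝ^A: F(p,q) equals the infimum over all vectors y ∈ ℝ^A with every entry positive of (∑_{x∈A} y_x q_x)·(∑_{x∈A} p_x / y_x), and F(p,q) also equals the infimum of ∑_{x∈A} y_x q_x over all y with every entry positive satisfying ∑_{x∈A} p_x / y_x ≤ 1. -/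
open Finset

open Filter Topology

private lemma fid_term_tendsto (a b : ℝ) (ha : 0 ≤ a) (hb : 0 ≤ b) :
    Filter.Tendsto (fun ε : ℝ => (Real.sqrt a + ε) * b / (Real.sqrt b + ε)) (𝓝 0)
      (𝓝 (Real.sqrt (a * b))) := by
  rcases eq_or_lt_of_le hb with hb0 | hb0
  · simp [← hb0]
  · have hden : Real.sqrt b + 0 ≠ 0 := by
      have := Real.sqrt_pos.mpr hb0; linarith
    have h : ContinuousAt (fun ε : ℝ => (Real.sqrt a + ε) * b / (Real.sqrt b + ε)) 0 := by
      exact ContinuousAt.div (by fun_prop) (by fun_prop) hden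
    have hval : (Real.sqrt a + 0) * b / (Real.sqrt b + 0) = Real.sqrt (a * b) := by
      rw [add_zero, add_zero, mul_div_assoc, Real.div_sqrt, ← Real.sqrt_mul ha]
    have := h.tendsto
    rw [hval] at this
    exact this

private lemma fid_lower {A : Type} [Fintype A] (p q : A → ℝ) (hp : ∀ x, 0 ≤ p x)
    (hq : ∀ x, 0 ≤ q x) (y : A → ℝ) (hy : ∀ x, 0 < y x) :
    fid p q ≤ (∑ x, y x * q x) * (∑ x, p x / y x) := by
  show (∑ i, Real.sqrt (p i * q i)) ^ 2 ≤ _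
  refine Finset.sum_sq_le_sum_mul_sum_of_sq_eq_mul _
    (fun i _ => mul_nonneg (hy i).le (hq i))
    (fun i _ => div_nonneg (hp i) (hy i).le) (fun i _ => ?_)
  rw [Real.sq_sqrt (mul_nonneg (hp i) (hq i))]
  rw [mul_comm (y i) (q i), mul_assoc, mul_div_cancel₀ _ (hy i).ne', mul_comm]

/-- The fidelity `F(p,q)` equals the infimum of `(∑ y_x q_x)(∑ p_x / y_x)` over
positive vectors `y`, and also equals the infimum of `∑ y_x q_x` over positive
vectors `y` with `∑ p_x / y_x ≤ 1`. -/
theorem fid_eq_inf_characterizations (A : Type) [Fintype A] [Nonempty A]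
    (p q : A → ℝ) (hp : ∀ x, 0 ≤ p x) (hq : ∀ x, 0 ≤ q x) :
    fid p q = sInf {v : ℝ | ∃ y : A → ℝ, (∀ x, 0 < y x) ∧
        v = (∑ x, y x * q x) * (∑ x, p x / y x)} ∧
    fid p q = sInf {v : ℝ | ∃ y : A → ℝ, (∀ x, 0 < y x) ∧
        (∑ x, p x / y x) ≤ 1 ∧ v = ∑ x, y x * q x} := by
  set s := ∑ x, Real.sqrt (p x * q x) with hs
  have hFs : fid p q = s * s := by rw [fid, sq]
  -- The two approximating families of sums
  set T : ℝ → ℝ := fun ε => ∑ x, (Real.sqrt (p x) + ε) * q x / (Real.sqrt (q x) + ε) with hT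
  set S : ℝ → ℝ := fun ε => ∑ x, p x * (Real.sqrt (q x) + ε) / (Real.sqrt (p x) + ε) with hS
  have hTt : Filter.Tendsto T (𝓝 0) (𝓝 s) := by
    rw [hT, hs]
    exact tendsto_finset_sum _ fun x _ => fid_term_tendsto (p x) (q x) (hp x) (hq x)
  have hSt : Filter.Tendsto S (𝓝 0) (𝓝 s) := by
    rw [hS, hs]
    refine tendsto_finset_sum _ fun x _ => ?_
    have h1 := fid_term_tendsto (q x) (p x) (hq x) (hp x)
    have h2 : (fun ε : ℝ => p x * (Real.sqrt (q x) + ε) / (Real.sqrt (p x) + ε))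
        = fun ε : ℝ => (Real.sqrt (q x) + ε) * p x / (Real.sqrt (p x) + ε) := by
      funext ε; rw [mul_comm (p x)]
    rw [h2, mul_comm (p x) (q x)]
    exact h1
  constructor
  · -- first characterization
    have hbdd : BddBelow {v : ℝ | ∃ y : A → ℝ, (∀ x, 0 < y x) ∧
        v = (∑ x, y x * q x) * (∑ x, p x / y x)} := by
      refine ⟨fid p q, fun v hv => ?_⟩
      obtain ⟨y, hy, rfl⟩ := hv
      exact fid_lower p q hp hq y hy
    refine le_antisymm ?_ ?_
    · refine le_csInf ⟨(∑ x, (1:ℝ) * q x) * (∑ x, p x / 1), ?_⟩ fun v hv => ?_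
      · exact ⟨fun _ => (1:ℝ), fun _ => one_pos, rfl⟩
      obtain ⟨y, hy, rfl⟩ := hv
      exact fid_lower p q hp hq y hy
    · rw [hFs]
      refine ge_of_tendsto (x := 𝓝[>] (0:ℝ)) ((hTt.mul hSt).mono_left nhdsWithin_le_nhds) ?_
      filter_upwards [self_mem_nhdsWithin] with ε hε
      have hε : (0:ℝ) < ε := hε
      refine csInf_le hbdd ⟨fun x => (Real.sqrt (p x) + ε) / (Real.sqrt (q x) + ε),
        fun x => by positivity, ?_⟩
      congr 1
      · refine Finset.sum_congr rfl fun x _ => ?_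
        rw [div_mul_eq_mul_div]
      · refine Finset.sum_congr rfl fun x _ => ?_
        rw [div_div_eq_mul_div]
  · -- second characterization
    have hSnn : ∀ ε : ℝ, 0 < ε → 0 ≤ S ε := by
      intro ε hε
      refine Finset.sum_nonneg fun x _ => ?_
      have h1 := hp x
      have h2 := Real.sqrt_nonneg (q x)
      have h3 := Real.sqrt_nonneg (p x)
      positivity
    have hbdd : BddBelow {v : ℝ | ∃ y : A → ℝ, (∀ x, 0 < y x) ∧
        (∑ x, p x / y x) ≤ 1 ∧ v = ∑ x, y x * q x} := by
      refine ⟨fid p q, fun v hv => ?_⟩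
      obtain ⟨y, hy, hc, rfl⟩ := hv
      calc fid p q ≤ (∑ x, y x * q x) * (∑ x, p x / y x) := fid_lower p q hp hq y hy
        _ ≤ (∑ x, y x * q x) * 1 := by
            refine mul_le_mul_of_nonneg_left hc ?_
            exact Finset.sum_nonneg fun x _ => mul_nonneg (hy x).le (hq x)
        _ = ∑ x, y x * q x := mul_one _
    refine le_antisymm ?_ ?_
    · refine le_csInf ?_ fun v hv => ?_
      · -- nonempty: take y = (∑ p/1 + 1) • 1, i.e. big constant
        have hpz : (0:ℝ) ≤ ∑ z, p z := Finset.sum_nonneg fun z _ => hp z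
        refine ⟨_, ⟨fun _ => ((∑ z, p z) + 1), fun x => ?_, ?_, rfl⟩⟩
        · show (0:ℝ) < (∑ z, p z) + 1
          linarith
        · show ∑ x, p x / ((∑ z, p z) + 1) ≤ 1
          rw [← Finset.sum_div, div_le_one (by linarith)]
          linarith
      · obtain ⟨y, hy, hc, rfl⟩ := hv
        calc fid p q ≤ (∑ x, y x * q x) * (∑ x, p x / y x) := fid_lower p q hp hq y hy
          _ ≤ (∑ x, y x * q x) * 1 := by
              refine mul_le_mul_of_nonneg_left hc ?_
              exact Finset.sum_nonneg fun x _ => mul_nonneg (hy x).le (hq x)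
          _ = ∑ x, y x * q x := mul_one _
    · rw [hFs]
      have htend : Filter.Tendsto (fun ε => (S ε + ε) * T ε) (𝓝[>] (0:ℝ)) (𝓝 (s * s)) := by
        have : Filter.Tendsto (fun ε : ℝ => (S ε + ε) * T ε) (𝓝 0) (𝓝 ((s + 0) * s)) :=
          (hSt.add tendsto_id).mul hTt
        simpa using this.mono_left nhdsWithin_le_nhds
      refine ge_of_tendsto htend ?_
      filter_upwards [self_mem_nhdsWithin] with ε hε
      have hε : (0:ℝ) < ε := hε
      have hc : 0 < S ε + ε := by have := hSnn ε hε; linarith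
      refine csInf_le hbdd ⟨fun x => (S ε + ε) * ((Real.sqrt (p x) + ε) / (Real.sqrt (q x) + ε)),
        fun x => by positivity, ?_, ?_⟩
      · have heq : ∑ x, p x / ((S ε + ε) * ((Real.sqrt (p x) + ε) / (Real.sqrt (q x) + ε)))
            = (∑ x, p x * (Real.sqrt (q x) + ε) / (Real.sqrt (p x) + ε)) / (S ε + ε) := by
          rw [Finset.sum_div]
          refine Finset.sum_congr rfl fun x _ => ?_
          rw [div_mul_eq_div_div_swap, div_div_eq_mul_div]
        have hSe : (∑ x, p x * (Real.sqrt (q x) + ε) / (Real.sqrt (p x) + ε)) = S ε := rfl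
        show ∑ x, p x / ((S ε + ε) * ((Real.sqrt (p x) + ε) / (Real.sqrt (q x) + ε))) ≤ 1
        rw [heq, hSe, div_le_one hc]
        linarith
      · show (S ε + ε) * (∑ x, (Real.sqrt (p x) + ε) * q x / (Real.sqrt (q x) + ε))
            = ∑ x, (S ε + ε) * ((Real.sqrt (p x) + ε) / (Real.sqrt (q x) + ε)) * q x
        rw [Finset.mul_sum]
        refine Finset.sum_congr rfl fun x _ => ?_
        ring
end

section
/- Let A be a finite nonempty set, p ∈ ℝ^A a nonnegative vector, and let ψ ∈ ℝ^{A×A} be the vector defined by ψ(x,x') = √(p_x) if x = x' and ψ(x,x') = 0 otherwise. For every y ∈ ℝ^A with all entries positive, the matrix Diag(y) − √p√pᵀ is positive semidefinite if and only if the (A×A)×(A×A) matrix Diag(y) ⊗ I_A − ψψᵀ is positive semidefinite, where ⊗ denotes the Kronecker product and ψψᵀ is the rank-one matrix with entries ψ(z)ψ(z') for z, z' ∈ A×A. -/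
open Finset Kronecker Matrix

lemma kron_diag {A : Type} [Fintype A] [DecidableEq A] (y : A → ℝ) :
    (Matrix.diagonal y) ⊗ₖ (1 : Matrix A A ℝ) =
      Matrix.diagonal (fun z : A × A => y z.1) := by
  ext ⟨i, j⟩ ⟨k, l⟩
  simp [Matrix.diagonal, Matrix.one_apply, Prod.ext_iff]
  split_ifs <;> simp_all

lemma quad {ι : Type} [Fintype ι] [DecidableEq ι] (d w u : ι → ℝ) :
    u ⬝ᵥ ((Matrix.diagonal d - Matrix.vecMulVec w w) *ᵥ u) =
      ∑ i, d i * u i ^ 2 - (∑ i, w i * u i) ^ 2 := by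
  have h1 : ∑ i, u i * ∑ j, w i * w j * u j
      = (∑ i, w i * u i) * (∑ j, w j * u j) := by
    rw [Finset.sum_mul_sum]
    refine Finset.sum_congr rfl fun i _ => ?_
    rw [Finset.mul_sum]
    exact Finset.sum_congr rfl fun j _ => by ring
  simp [Matrix.sub_mulVec, dotProduct, Matrix.mulVec, Matrix.vecMulVec,
    Finset.mul_sum, mul_sub, Finset.sum_sub_distrib]
  rw [sq (∑ i, w i * u i), ← h1, ← Finset.sum_sub_distrib]
  refine Finset.sum_congr rfl fun x _ => ?_
  have e : ∀ i, u x * ((Matrix.diagonal d x i - w x * w i) * u i)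
      = u x * (Matrix.diagonal d x i * u i) - u x * (w x * w i * u i) := fun i => by ring
  simp only [e, Finset.sum_sub_distrib]
  congr 1
  · simp [Matrix.diagonal_apply, mul_ite, ite_mul]
    ring
  · rw [Finset.mul_sum]


lemma herm {ι : Type} [Fintype ι] [DecidableEq ι] (d w : ι → ℝ) :
    (Matrix.diagonal d - Matrix.vecMulVec w w).IsHermitian := by
  apply Matrix.IsHermitian.sub (Matrix.isHermitian_diagonal d)
  unfold Matrix.IsHermitian
  ext i j
  simp [Matrix.vecMulVec_apply, mul_comm]

/-- For a nonnegative vector `p` on `A`, a positive vector `y`, and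
`ψ(x,x') = √(p x)` if `x = x'` and `0` otherwise, `Diag(y) − √p√pᵀ` is positive
semidefinite iff `Diag(y) ⊗ I_A − ψψᵀ` is positive semidefinite. -/
theorem diagonal_sub_sqrtOuter_iff_kron (A : Type) [Fintype A] [Nonempty A]
    [DecidableEq A]
    (p y : A → ℝ) (hp : ∀ x, 0 ≤ p x) (hy : ∀ x, 0 < y x)
    (ψ : A × A → ℝ)
    (hψ : ∀ z : A × A, ψ z = if z.1 = z.2 then Real.sqrt (p z.1) else 0) :
    (Matrix.diagonal y - Matrix.of fun x x' => Real.sqrt (p x * p x')).PosSemidef ↔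
      ((Matrix.diagonal y) ⊗ₖ (1 : Matrix A A ℝ) - Matrix.vecMulVec ψ ψ).PosSemidef := by
  have hd : (Matrix.of fun x x' => Real.sqrt (p x * p x'))
      = Matrix.vecMulVec (fun x => Real.sqrt (p x)) (fun x => Real.sqrt (p x)) := by
    ext x x'
    simp [Matrix.vecMulVec_apply, Real.sqrt_mul (hp x)]
  rw [hd, kron_diag]
  constructor
  · intro h
    refine .of_dotProduct_mulVec_nonneg (herm _ _) fun v => ?_
    have key := h.dotProduct_mulVec_nonneg (fun x => v (x, x))
    rw [star_trivial, quad] at key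
    rw [star_trivial, quad]
    have hsum : ∑ z : A × A, ψ z * v z = ∑ x, Real.sqrt (p x) * v (x, x) := by
      rw [Fintype.sum_prod_type]
      refine Finset.sum_congr rfl fun i _ => ?_
      simp [hψ, ite_mul]
    have hsum2 : ∑ x, y x * (v (x, x)) ^ 2 ≤ ∑ z : A × A, y z.1 * v z ^ 2 := by
      rw [Fintype.sum_prod_type]
      refine Finset.sum_le_sum fun i _ => ?_
      exact Finset.single_le_sum (f := fun j => y i * v (i, j) ^ 2)
        (fun j _ => by have := (hy i).le; positivity) (Finset.mem_univ i)
    rw [hsum]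
    linarith
  · intro h
    refine .of_dotProduct_mulVec_nonneg (herm _ _) fun u => ?_
    set v : A × A → ℝ := fun z => if z.1 = z.2 then u z.1 else 0 with hv
    have key := h.dotProduct_mulVec_nonneg v
    rw [star_trivial, quad] at key
    rw [star_trivial, quad]
    have h1 : ∑ z : A × A, y z.1 * v z ^ 2 = ∑ x, y x * u x ^ 2 := by
      rw [Fintype.sum_prod_type]
      refine Finset.sum_congr rfl fun i _ => ?_
      simp [hv, apply_ite (· ^ 2), mul_ite]
    have h2 : ∑ z : A × A, ψ z * v z = ∑ x, Real.sqrt (p x) * u x := by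
      rw [Fintype.sum_prod_type]
      refine Finset.sum_congr rfl fun i _ => ?_
      simp [hv, hψ, ite_mul, mul_ite]
    rw [h1, h2] at key
    exact key
end

section
/- Let n ≥ 1, let ψ ∈ ℂⁿ, let S be a set of n×n Hermitian complex matrices, and let F : ℝ → ℝ be continuous and monotonically nondecreasing. Then the infimum of F(ψ*Xψ) over all pairs (X,Y) of n×n Hermitian matrices with X − Y positive semidefinite and Y ∈ S equals the infimum of F(ψ*Xψ) over all pairs (X,Y) of n×n Hermitian matrices with ψ*Xψ ≥ ψ*Yψ and Y ∈ S (here ψ*Xψ denotes the real number ⟨ψ, Xψ⟩, which is real since X is Hermitian, and the infima are taken in ℝ as sInf of the corresponding sets of values). -/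
open Matrix
open scoped ComplexOrder

lemma vecMulVec_star_posSemidef {n : ℕ} (a : Fin n → ℂ) :
    (vecMulVec a (star a)).PosSemidef := by
  rw [vecMulVec_eq Unit, ← conjTranspose_replicateCol]
  exact posSemidef_self_mul_conjTranspose _

lemma dot_vecMulVec {n : ℕ} (ψ a : Fin n → ℂ) :
    star ψ ⬝ᵥ (vecMulVec a (star a)) *ᵥ ψ = (star ψ ⬝ᵥ a) * (star a ⬝ᵥ ψ) := by
  simp only [dotProduct, mulVec, vecMulVec_apply, Pi.star_apply, Finset.mul_sum,
    Finset.sum_mul]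
  rw [Finset.sum_comm]
  congr 1; ext i; congr 1; ext j; ring

/-- The Subspace lemma: for a vector `ψ ∈ ℂⁿ`, a set `S` of Hermitian matrices, and a
continuous monotonically nondecreasing `F : ℝ → ℝ`, the infimum of `F(ψ*Xψ)` over
Hermitian pairs `(X,Y)` with `X − Y ⪰ 0` and `Y ∈ S` equals the infimum over Hermitian
pairs `(X,Y)` with `ψ*Xψ ≥ ψ*Yψ` and `Y ∈ S`. -/
theorem subspace_lemma (n : ℕ) (hn : 1 ≤ n) (ψ : Fin n → ℂ)
    (S : Set (Matrix (Fin n) (Fin n) ℂ)) (hS : ∀ Y ∈ S, Y.IsHermitian)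
    (F : ℝ → ℝ) (hF : Continuous F) (hFmono : Monotone F) :
    sInf {v : ℝ | ∃ X Y : Matrix (Fin n) (Fin n) ℂ,
        X.IsHermitian ∧ Y.IsHermitian ∧ (X - Y).PosSemidef ∧ Y ∈ S ∧
        v = F ((star ψ ⬝ᵥ X *ᵥ ψ).re)} =
    sInf {v : ℝ | ∃ X Y : Matrix (Fin n) (Fin n) ℂ,
        X.IsHermitian ∧ Y.IsHermitian ∧
        ((star ψ ⬝ᵥ Y *ᵥ ψ).re ≤ (star ψ ⬝ᵥ X *ᵥ ψ).re) ∧ Y ∈ S ∧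
        v = F ((star ψ ⬝ᵥ X *ᵥ ψ).re)} := by
  congr 1
  ext v
  constructor
  · rintro ⟨X, Y, hX, hY, hPSD, hYS, rfl⟩
    refine ⟨X, Y, hX, hY, ?_, hYS, rfl⟩
    have h := hPSD.dotProduct_mulVec_nonneg ψ
    rw [sub_mulVec, dotProduct_sub] at h
    have := Complex.le_def.mp h
    simp at this
    linarith [this.1]
  · rintro ⟨X, Y, hX, hY, hle, hYS, rfl⟩
    by_cases hψ : ψ = 0
    · refine ⟨Y, Y, hY, hY, by simpa using Matrix.PosSemidef.zero, hYS, ?_⟩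
      simp [hψ]
    · -- s = star ψ ⬝ᵥ ψ is a positive real r
      set r : ℝ := ∑ i, Complex.normSq (ψ i) with hr
      have hs : star ψ ⬝ᵥ ψ = (r : ℂ) := by
        simp [dotProduct, hr, Complex.normSq_eq_conj_mul_self]
      have hrpos : 0 < r := by
        have : ∃ i, ψ i ≠ 0 := by
          by_contra h; push_neg at h; exact hψ (funext h)
        obtain ⟨i, hi⟩ := this
        exact Finset.sum_pos' (fun j _ => Complex.normSq_nonneg _)
          ⟨i, Finset.mem_univ i, Complex.normSq_pos.mpr hi⟩
      set t : ℝ := (star ψ ⬝ᵥ X *ᵥ ψ).re - (star ψ ⬝ᵥ Y *ᵥ ψ).re with ht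
      have htnn : 0 ≤ t := by simp [ht]; linarith
      set c : ℝ := t / (r * r) with hc
      have hcnn : 0 ≤ c := div_nonneg htnn (mul_nonneg hrpos.le hrpos.le)
      set a : Fin n → ℂ := (Real.sqrt c : ℂ) • ψ with ha
      set D := vecMulVec a (star a) with hD
      have hDpsd : D.PosSemidef := vecMulVec_star_posSemidef a
      have hdot : star ψ ⬝ᵥ D *ᵥ ψ = ((c * (r * r) : ℝ) : ℂ) := by
        rw [hD, dot_vecMulVec, ha]
        have h1 : star ψ ⬝ᵥ ((Real.sqrt c : ℂ) • ψ) = (Real.sqrt c : ℂ) * (r : ℂ) := by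
          rw [dotProduct_smul, hs]; simp
        have h2 : star ((Real.sqrt c : ℂ) • ψ) ⬝ᵥ ψ = (Real.sqrt c : ℂ) * (r : ℂ) := by
          rw [star_smul, smul_dotProduct, hs]; simp
        rw [h1, h2]
        have hreal : Real.sqrt c * r * (Real.sqrt c * r) = c * (r * r) := by
          rw [show Real.sqrt c * r * (Real.sqrt c * r)
              = Real.sqrt c * Real.sqrt c * (r * r) by ring, Real.mul_self_sqrt hcnn]
        push_cast
        exact_mod_cast hreal
      refine ⟨Y + D, Y, hY.add hDpsd.1, hY, by simpa using hDpsd, hYS, ?_⟩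
      have : (star ψ ⬝ᵥ (Y + D) *ᵥ ψ).re = (star ψ ⬝ᵥ X *ᵥ ψ).re := by
        rw [add_mulVec, dotProduct_add, Complex.add_re, hdot]
        have : c * (r * r) = t := by
          rw [hc]; field_simp
        simp [this, ht]
      rw [this]
end

section
/- For every n ≥ 1, every unit vector ψ ∈ ℂⁿ, every n×n Hermitian complex matrix Z, and every δ > 0, there exists a real number Λ such that the matrix (ψ*Zψ + δ)·ψψ* + Λ·(I − ψψ*) − Z is positive semidefinite, where ψψ* is the rank-one orthogonal projection onto the span of ψ. -/
open Matrix
open scoped ComplexOrder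

private lemma young_aux (δ x y : ℝ) (hδ : 0 < δ) : 2*x*y ≤ δ*x^2 + y^2/δ := by
  have h2 : 2*x*y*δ ≤ (δ*x^2 + y^2/δ)*δ := by
    have h := sq_nonneg (δ*x - y)
    field_simp
    nlinarith
  exact le_of_mul_le_mul_right h2 hδ

set_option maxHeartbeats 1000000 in
/-- For any unit vector `ψ ∈ ℂⁿ`, Hermitian `Z`, and `δ > 0`, there is `Λ ∈ ℝ` with
`(ψ*Zψ + δ)·ψψ* + Λ·(I − ψψ*) − Z ⪰ 0`. -/
theorem exists_shift_posSemidef (n : ℕ) (hn : 1 ≤ n) (ψ : Fin n → ℂ)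
    (hψ : star ψ ⬝ᵥ ψ = 1)
    (Z : Matrix (Fin n) (Fin n) ℂ) (hZ : Z.IsHermitian) (δ : ℝ) (hδ : 0 < δ) :
    ∃ Λ : ℝ,
      (((((star ψ ⬝ᵥ Z *ᵥ ψ).re + δ : ℝ) : ℂ)) • Matrix.vecMulVec ψ (star ψ) +
        (Λ : ℂ) • ((1 : Matrix (Fin n) (Fin n) ℂ) - Matrix.vecMulVec ψ (star ψ)) -
        Z).PosSemidef := by
  classical
  set P : Matrix (Fin n) (Fin n) ℂ := Matrix.vecMulVec ψ (star ψ) with hPdef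
  set c : ℝ := (star ψ ⬝ᵥ Z *ᵥ ψ).re with hcdef
  -- hermitian realness of quadratic forms
  have hherm : ∀ v : Fin n → ℂ, (starRingEnd ℂ) (star v ⬝ᵥ Z *ᵥ v) = star v ⬝ᵥ Z *ᵥ v := by
    intro v
    have h2 : star (Z *ᵥ v) ⬝ᵥ v = star v ⬝ᵥ Z *ᵥ v := by
      rw [star_mulVec, hZ.eq, ← dotProduct_mulVec]
    calc (starRingEnd ℂ) (star v ⬝ᵥ Z *ᵥ v) = star (star v ⬝ᵥ Z *ᵥ v) := rfl
      _ = star (star (star (Z *ᵥ v) ⬝ᵥ v)) := by rw [star_dotProduct]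
      _ = star (Z *ᵥ v) ⬝ᵥ v := star_star _
      _ = star v ⬝ᵥ Z *ᵥ v := h2
  -- Euclidean space machinery
  set e : (Fin n → ℂ) → EuclideanSpace ℂ (Fin n) := fun v => (WithLp.equiv 2 (Fin n → ℂ)).symm v with hedef
  have he_inner : ∀ v w : Fin n → ℂ, (inner ℂ (e v) (e w) : ℂ) = star v ⬝ᵥ w := fun v w =>
    (EuclideanSpace.inner_toLp_toLp v w).trans (dotProduct_comm _ _)
  set N : ℝ := ‖Matrix.toEuclideanCLM (𝕜 := ℂ) Z‖ with hNdef
  have hN : 0 ≤ N := norm_nonneg _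
  have hCLM : ∀ v : Fin n → ℂ, Matrix.toEuclideanCLM (𝕜 := ℂ) Z (e v) = e (Z *ᵥ v) := by
    intro v
    rw [hedef]
    rw [WithLp.equiv_symm_apply, Matrix.toEuclideanCLM_toLp]
  have hZv_norm : ∀ v : Fin n → ℂ, ‖e (Z *ᵥ v)‖ ≤ N * ‖e v‖ := by
    intro v
    rw [← hCLM]
    exact (Matrix.toEuclideanCLM (𝕜 := ℂ) Z).le_opNorm (e v)
  -- norm of ψ
  have hψnorm : ‖e ψ‖ = 1 := by
    have h1 : (inner ℂ (e ψ) (e ψ) : ℂ) = ((‖e ψ‖ : ℂ)) ^ 2 := inner_self_eq_norm_sq_to_K _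
    rw [he_inner, hψ] at h1
    rw [← Complex.ofReal_pow] at h1
    have h2 : (‖e ψ‖ : ℝ) ^ 2 = 1 := by exact_mod_cast h1.symm
    nlinarith [norm_nonneg (e ψ)]
  refine ⟨N^2/δ + N, Matrix.posSemidef_iff_dotProduct_mulVec.mpr ⟨?_, ?_⟩⟩
  · -- Hermitian
    have hPH : P.IsHermitian := by
      ext i j
      simp [hPdef, Matrix.conjTranspose_apply, Matrix.vecMulVec_apply, mul_comm]
    simp only [Matrix.IsHermitian, Matrix.conjTranspose_sub, Matrix.conjTranspose_add,
      Matrix.conjTranspose_smul, Complex.star_def, Complex.conj_ofReal, hPH.eq, hZ.eq,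
      Matrix.conjTranspose_one]
  · intro x
    set Λ : ℝ := N^2/δ + N with hΛdef
    set a : ℂ := star ψ ⬝ᵥ x with hadef
    set u : Fin n → ℂ := x - a • ψ with hudef
    have hx : x = u + a • ψ := by rw [hudef]; abel
    have hψu : star ψ ⬝ᵥ u = 0 := by
      rw [hudef]
      simp [dotProduct_sub, hψ, ← hadef]
    have huψ : star u ⬝ᵥ ψ = 0 := by
      rw [star_dotProduct, hψu, star_zero]
    set b : ℂ := star ψ ⬝ᵥ Z *ᵥ u with hbdef
    set q : ℂ := star u ⬝ᵥ Z *ᵥ u with hqdef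
    set t : ℂ := star u ⬝ᵥ u with htdef
    have hub : star u ⬝ᵥ Z *ᵥ ψ = star b := by
      rw [star_dotProduct]
      congr 1
      rw [star_mulVec, hZ.eq, ← dotProduct_mulVec]
    -- P *ᵥ x = a • ψ
    have hPx : P *ᵥ x = a • ψ := by
      ext i
      simp only [hPdef, Matrix.mulVec, Matrix.vecMulVec_apply, dotProduct,
        Pi.smul_apply, smul_eq_mul, hadef]
      rw [Finset.sum_mul]
      exact Finset.sum_congr rfl fun j _ => by ring
    -- expand everything
    have hxx : star x ⬝ᵥ x = t + star a * a := by
      conv_lhs => rw [hx]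
      simp [dotProduct_add, add_dotProduct, star_add, star_smul,
        smul_dotProduct, dotProduct_smul, hψu, huψ, hψ, htdef,
        Complex.star_def, mul_comm, mul_assoc]
      try ring
    have hxsψ : star x ⬝ᵥ ψ = star a := by
      rw [star_dotProduct, ← hadef]
    have hxZx : star x ⬝ᵥ Z *ᵥ x =
        q + a * star b + star a * b + star a * a * (star ψ ⬝ᵥ Z *ᵥ ψ) := by
      conv_lhs => rw [hx]
      rw [Matrix.mulVec_add, Matrix.mulVec_smul]
      simp only [dotProduct_add, add_dotProduct, star_add, star_smul,
        smul_dotProduct, dotProduct_smul, smul_eq_mul, hub, ← hbdef, ← hqdef,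
        Complex.star_def]
      ring
    have hcc : (star ψ ⬝ᵥ Z *ᵥ ψ) = (c : ℂ) := by
      rw [hcdef]
      exact (Complex.conj_eq_iff_re.mp (hherm ψ)).symm
    -- the quadratic form value
    have hval : star x ⬝ᵥ
        ((((c + δ : ℝ) : ℂ)) • P + (Λ : ℂ) • ((1 : Matrix (Fin n) (Fin n) ℂ) - P) - Z) *ᵥ x
        = (δ : ℂ) * (a * star a) + (Λ : ℂ) * t - (a * star b + star a * b) - q := by
      rw [Matrix.sub_mulVec, Matrix.add_mulVec, Matrix.smul_mulVec,
        Matrix.smul_mulVec, Matrix.sub_mulVec, Matrix.one_mulVec, hPx]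
      simp only [dotProduct_sub, dotProduct_add, dotProduct_smul,
        smul_eq_mul, dotProduct_smul, hxx, hxZx, hcc]
      rw [hxsψ]
      push_cast
      ring
    rw [hval]
    -- now show the complex number is a nonneg real
    set τ : ℝ := ‖e u‖ with hτdef
    have hτ : 0 ≤ τ := norm_nonneg _
    have ht : t = ((τ^2 : ℝ) : ℂ) := by
      rw [htdef, ← he_inner, inner_self_eq_norm_sq_to_K, hτdef]
      all_goals try push_cast
      all_goals try ring
      all_goals try rfl
    have haA : a * star a = ((‖a‖ ^ 2 : ℝ) : ℂ) := by
      rw [Complex.star_def, Complex.mul_conj, Complex.sq_norm]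
    have hq_real : q = ((q.re : ℝ) : ℂ) := (Complex.conj_eq_iff_re.mp (hherm u)).symm
    have hzsum : a * star b + star a * b = ((2 * (star a * b).re : ℝ) : ℂ) := by
      have h1 : a * star b = (starRingEnd ℂ) (star a * b) := by
        simp [Complex.star_def, mul_comm]
      rw [h1, add_comm, Complex.add_conj]
      all_goals try push_cast
      all_goals try ring
      all_goals try rfl
    rw [ht, haA, hq_real, hzsum]
    have : (δ : ℂ) * ((‖a‖ ^ 2 : ℝ) : ℂ) + (Λ : ℂ) * ((τ^2 : ℝ) : ℂ) -
        (((2 * (star a * b).re : ℝ) : ℂ)) - ((q.re : ℝ) : ℂ)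
        = ((δ * ‖a‖ ^ 2 + Λ * τ^2 - 2 * (star a * b).re - q.re : ℝ) : ℂ) := by
      push_cast
      ring
    rw [this]
    rw [Complex.zero_le_real]
    -- real inequality
    set α : ℝ := ‖a‖ with hαdef
    have hα : 0 ≤ α := norm_nonneg a
    -- bound on b
    have hb_bound : ‖b‖ ≤ N * τ := by
      have h1 : b = (inner ℂ (e ψ) (e (Z *ᵥ u)) : ℂ) := by rw [he_inner, hbdef]
      have h2 : ‖(inner ℂ (e ψ) (e (Z *ᵥ u)) : ℂ)‖ ≤ ‖e ψ‖ * ‖e (Z *ᵥ u)‖ :=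
        norm_inner_le_norm _ _
      rw [← h1] at h2
      rw [hψnorm, one_mul] at h2
      calc ‖b‖ = ‖b‖ := rfl
        _ ≤ ‖e (Z *ᵥ u)‖ := h2
        _ ≤ N * τ := hZv_norm u
    -- bound on q
    have hq_bound : q.re ≤ N * τ^2 := by
      have h1 : q = (inner ℂ (e u) (e (Z *ᵥ u)) : ℂ) := by rw [he_inner, hqdef]
      have h2 : ‖(inner ℂ (e u) (e (Z *ᵥ u)) : ℂ)‖ ≤ ‖e u‖ * ‖e (Z *ᵥ u)‖ :=
        norm_inner_le_norm _ _
      have h3 : q.re ≤ ‖q‖ := Complex.re_le_norm q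
      have h4 : ‖e u‖ * ‖e (Z *ᵥ u)‖ ≤ τ * (N * τ) :=
        mul_le_mul_of_nonneg_left (hZv_norm u) hτ
      rw [← h1] at h2
      nlinarith
    -- bound on cross term
    have hz_bound : (star a * b).re ≤ α * (N * τ) := by
      have h1 : (star a * b).re ≤ ‖star a * b‖ := Complex.re_le_norm _
      have h2 : ‖star a * b‖ = α * ‖b‖ := by
        rw [norm_mul, hαdef]
        simp
      have h3 : α * ‖b‖ ≤ α * (N * τ) :=
        mul_le_mul_of_nonneg_left hb_bound hα
      linarith
    have hyoung : 2 * α * (N * τ) ≤ δ * α^2 + (N * τ)^2 / δ := young_aux δ α (N * τ) hδ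
    have hNτ : (N * τ)^2 / δ = N^2/δ * τ^2 := by
      rw [mul_pow, div_mul_eq_mul_div]
      all_goals try ring
    generalize hzre : (star a * b).re = zre at hz_bound ⊢
    generalize hqre : q.re = qre at hq_bound ⊢
    clear_value Λ τ α N
    nlinarith [hyoung, hz_bound, hq_bound, hNτ, hΛdef, hτ, hα, hN]
end

section
/- Let p₀, p₁, …, p_m be a sequence of configurations such that p₀ = (1/2)·[0,1] + (1/2)·[1,0], p_m = 1·[ζ_B, ζ_A] for some ζ_B, ζ_A ≥ 0, and for each i the configuration p_{i+1} is obtained from p_i by a single point raise or a single point merge (in either coordinate). Then ζ_B ≥ 1 or ζ_A ≥ 1. -/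
open scoped NNReal

/-- A point-game configuration: a finitely supported assignment of nonnegative
masses to points of the nonnegative quadrant. -/
abbrev PGConfig := (ℝ≥0 × ℝ≥0) →₀ ℝ≥0

/-- A single point-game move: a point raise (vertical or horizontal) or a point
merge (vertical or horizontal).  (Probability splitting and probability merging do
not change a configuration viewed as a function.) -/
def PGMove (p p' : PGConfig) : Prop :=
  -- vertical point raise
  (∃ (r : PGConfig) (w z z' q : ℝ≥0), 0 < q ∧ z ≤ z' ∧
      p = r + Finsupp.single (w, z) q ∧ p' = r + Finsupp.single (w, z') q) ∨
  -- horizontal point raise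
  (∃ (r : PGConfig) (w w' z q : ℝ≥0), 0 < q ∧ w ≤ w' ∧
      p = r + Finsupp.single (w, z) q ∧ p' = r + Finsupp.single (w', z) q) ∨
  -- vertical point merge
  (∃ (r : PGConfig) (w z₁ z₂ q₁ q₂ : ℝ≥0), 0 < q₁ ∧ 0 < q₂ ∧
      p = r + Finsupp.single (w, z₁) q₁ + Finsupp.single (w, z₂) q₂ ∧
      p' = r + Finsupp.single (w, (q₁ * z₁ + q₂ * z₂) / (q₁ + q₂)) (q₁ + q₂)) ∨
  -- horizontal point merge
  (∃ (r : PGConfig) (w₁ w₂ z q₁ q₂ : ℝ≥0), 0 < q₁ ∧ 0 < q₂ ∧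
      p = r + Finsupp.single (w₁, z) q₁ + Finsupp.single (w₂, z) q₂ ∧
      p' = r + Finsupp.single ((q₁ * w₁ + q₂ * w₂) / (q₁ + q₂), z) (q₁ + q₂))

/-- The invariant: every support point has a coordinate `≥ 1`. -/
def PGInv (p : PGConfig) : Prop := ∀ x : ℝ≥0 × ℝ≥0, p x ≠ 0 → 1 ≤ x.1 ∨ 1 ≤ x.2

lemma pg_add_left_ne (r s : PGConfig) (x : ℝ≥0 × ℝ≥0) (h : r x ≠ 0) : (r + s) x ≠ 0 := by
  rw [Finsupp.add_apply]
  intro hc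
  exact h (add_eq_zero.mp hc).1

lemma pg_add_ne_cases (r : PGConfig) (a : ℝ≥0 × ℝ≥0) (q : ℝ≥0) (x : ℝ≥0 × ℝ≥0)
    (h : (r + Finsupp.single a q) x ≠ 0) : r x ≠ 0 ∨ x = a := by
  by_cases hx : x = a
  · exact Or.inr hx
  · left
    rwa [Finsupp.add_apply, Finsupp.single_eq_of_ne' (Ne.symm hx), add_zero] at h

lemma pg_single_pt_ne (r : PGConfig) (a : ℝ≥0 × ℝ≥0) (q : ℝ≥0) (hq : 0 < q) :
    (r + Finsupp.single a q) a ≠ 0 := by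
  simp [Finsupp.add_apply, Finsupp.single_eq_same, add_eq_zero]
  exact fun _ => hq.ne'

lemma pg_avg_ge (q₁ q₂ z₁ z₂ : ℝ≥0) (h1 : 0 < q₁) (hz1 : 1 ≤ z₁) (hz2 : 1 ≤ z₂) :
    1 ≤ (q₁ * z₁ + q₂ * z₂) / (q₁ + q₂) := by
  rw [le_div_iff₀ (by positivity), one_mul]
  calc q₁ + q₂ = q₁ * 1 + q₂ * 1 := by ring
  _ ≤ q₁ * z₁ + q₂ * z₂ := by gcongr

lemma pg_move_inv {p p' : PGConfig} (hm : PGMove p p') (hi : PGInv p) : PGInv p' := by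
  rcases hm with ⟨r, w, z, z', q, hq, hzz, hp, hp'⟩ | ⟨r, w, w', z, q, hq, hww, hp, hp'⟩ |
    ⟨r, w, z₁, z₂, q₁, q₂, h1, h2, hp, hp'⟩ | ⟨r, w₁, w₂, z, q₁, q₂, h1, h2, hp, hp'⟩
  · intro x hx
    rw [hp'] at hx
    rcases pg_add_ne_cases _ _ _ _ hx with h | rfl
    · exact hi x (hp ▸ pg_add_left_ne r _ x h)
    · rcases hi (w, z) (hp ▸ pg_single_pt_ne r _ q hq) with h | h
      · exact Or.inl h
      · exact Or.inr (h.trans hzz)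
  · intro x hx
    rw [hp'] at hx
    rcases pg_add_ne_cases _ _ _ _ hx with h | rfl
    · exact hi x (hp ▸ pg_add_left_ne r _ x h)
    · rcases hi (w, z) (hp ▸ pg_single_pt_ne r _ q hq) with h | h
      · exact Or.inl (h.trans hww)
      · exact Or.inr h
  · intro x hx
    rw [hp'] at hx
    rcases pg_add_ne_cases _ _ _ _ hx with h | rfl
    · exact hi x (hp ▸ pg_add_left_ne _ _ x (pg_add_left_ne r _ x h))
    · have m1 := hi (w, z₁) (hp ▸ pg_add_left_ne _ _ _ (pg_single_pt_ne r _ q₁ h1))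
      have m2 := hi (w, z₂) (hp ▸ pg_single_pt_ne (r + Finsupp.single (w, z₁) q₁) _ q₂ h2)
      rcases m1 with h | hz1
      · exact Or.inl h
      · rcases m2 with h | hz2
        · exact Or.inl h
        · exact Or.inr (pg_avg_ge q₁ q₂ z₁ z₂ h1 hz1 hz2)
  · intro x hx
    rw [hp'] at hx
    rcases pg_add_ne_cases _ _ _ _ hx with h | rfl
    · exact hi x (hp ▸ pg_add_left_ne _ _ x (pg_add_left_ne r _ x h))
    · have m1 := hi (w₁, z) (hp ▸ pg_add_left_ne _ _ _ (pg_single_pt_ne r _ q₁ h1))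
      have m2 := hi (w₂, z) (hp ▸ pg_single_pt_ne (r + Finsupp.single (w₁, z) q₁) _ q₂ h2)
      rcases m2 with hw2 | h
      · rcases m1 with hw1 | h
        · exact Or.inl (pg_avg_ge q₁ q₂ w₁ w₂ h1 hw1 hw2)
        · exact Or.inr h
      · exact Or.inr h

/-- In any point game starting from `(1/2)[0,1] + (1/2)[1,0]` whose moves are point
raises and point merges and which ends in a single point `1·[ζ_B, ζ_A]`, we have
`ζ_B ≥ 1` or `ζ_A ≥ 1`. -/
theorem point_game_final_point (m : ℕ) (p : Fin (m + 1) → PGConfig) (ζB ζA : ℝ≥0)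
    (h0 : p 0 = Finsupp.single (0, 1) (1 / 2) + Finsupp.single (1, 0) (1 / 2))
    (hm : p (Fin.last m) = Finsupp.single (ζB, ζA) 1)
    (hstep : ∀ i : Fin m, PGMove (p i.castSucc) (p i.succ)) :
    1 ≤ ζB ∨ 1 ≤ ζA := by
  have key : ∀ i : Fin (m + 1), PGInv (p i) := by
    intro i
    induction i using Fin.induction with
    | zero =>
      intro x hx
      rw [h0, Finsupp.add_apply] at hx
      have hx' : (Finsupp.single ((0:ℝ≥0),(1:ℝ≥0)) (1/2 : ℝ≥0)) x ≠ 0 ∨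
          (Finsupp.single ((1:ℝ≥0),(0:ℝ≥0)) (1/2 : ℝ≥0)) x ≠ 0 := by
        by_contra hc
        push_neg at hc
        rw [hc.1, hc.2, add_zero] at hx
        exact hx rfl
      rcases hx' with h | h
      · have : x = ((0 : ℝ≥0), (1 : ℝ≥0)) := by
          by_contra hne
          exact h (Finsupp.single_eq_of_ne' (Ne.symm hne))
        subst this; exact Or.inr le_rfl
      · have : x = ((1 : ℝ≥0), (0 : ℝ≥0)) := by
          by_contra hne
          exact h (Finsupp.single_eq_of_ne' (Ne.symm hne))
        subst this; exact Or.inl le_rfl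
    | succ i ih => exact pg_move_inv (hstep i) ih
  have := key (Fin.last m) (ζB, ζA) (by rw [hm]; simp)
  exact this
end

section
/- A tuple (p₁,…,pₙ) ∈ P_B is an extreme point of the convex set P_B if and only if every value of every p_j lies in {0,1}; likewise, a tuple (s₁,…,sₙ,s) ∈ P_A is an extreme point of the convex set P_A if and only if every value of s₁,…,sₙ and of s lies in {0,1}. -/
open Finset

namespace BCCF

variable {n : ℕ}

/-- Membership in Bob's cheating polytope `P_B`, encoded on full products:
`p j` plays the role of `p_{j+1}` and is required to depend only on the
coordinates `x_1,…,x_{j+1}` and `y_1,…,y_{j+1}`. -/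
def MemBob (A B : Fin n → Type) [∀ i, Fintype (A i)] [∀ i, Fintype (B i)]
    (p : Fin n → ((i : Fin n) → A i) → ((i : Fin n) → B i) → ℝ) : Prop :=
  (∀ j x y, 0 ≤ p j x y) ∧
  (∀ (j : Fin n) (x x' : (i : Fin n) → A i) (y y' : (i : Fin n) → B i),
      (∀ i, i ≤ j → x i = x' i) → (∀ i, i ≤ j → y i = y' i) → p j x y = p j x' y') ∧
  (∀ j : Fin n, (j : ℕ) = 0 → ∀ x y, ∑ b : B j, p j x (Function.update y j b) = 1) ∧
  (∀ j k : Fin n, (j : ℕ) = (k : ℕ) + 1 → ∀ x y,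
      ∑ b : B j, p j x (Function.update y j b) = p k x y)

/-- Membership in Alice's cheating polytope `P_A`, encoded on full products:
`s j` plays the role of `s_{j+1}` (depending on `x_1,…,x_{j+1}` and
`y_1,…,y_j`) and `sF` plays the role of the final function `s` on `{0,1}×A×B`. -/
def MemAlice (A B : Fin n → Type) [∀ i, Fintype (A i)] [∀ i, Fintype (B i)] (hn : 0 < n)
    (s : Fin n → ((i : Fin n) → A i) → ((i : Fin n) → B i) → ℝ)
    (sF : Bool → ((i : Fin n) → A i) → ((i : Fin n) → B i) → ℝ) : Prop :=
  (∀ j x y, 0 ≤ s j x y) ∧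
  (∀ a x y, 0 ≤ sF a x y) ∧
  (∀ (j : Fin n) (x x' : (i : Fin n) → A i) (y y' : (i : Fin n) → B i),
      (∀ i, i ≤ j → x i = x' i) → (∀ i, i < j → y i = y' i) → s j x y = s j x' y') ∧
  (∀ j : Fin n, (j : ℕ) = 0 → ∀ x y, ∑ a : A j, s j (Function.update x j a) y = 1) ∧
  (∀ j k : Fin n, (j : ℕ) = (k : ℕ) + 1 → ∀ x y,
      ∑ a : A j, s j (Function.update x j a) y = s k x y) ∧
  (∀ x y, sF false x y + sF true x y = s ⟨n - 1, Nat.sub_lt hn Nat.one_pos⟩ x y)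

/-- Fidelity of two nonnegative vectors. -/
noncomputable def fid {ι : Type} [Fintype ι] (u v : ι → ℝ) : ℝ :=
  (∑ i, Real.sqrt (u i * v i)) ^ 2

/-- `u` is a probability distribution. -/
def IsProbDist {ι : Type} [Fintype ι] (u : ι → ℝ) : Prop :=
  (∀ i, 0 ≤ u i) ∧ ∑ i, u i = 1

/-- Trace distance of two vectors. -/
noncomputable def tdist {ι : Type} [Fintype ι] (u v : ι → ℝ) : ℝ :=
  (1 / 2) * ∑ i, |u i - v i|

/-- Objective value of cheating Bob forcing outcome `c` in the quantum protocol. -/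
noncomputable def bobObjQ (A B : Fin n → Type) [∀ i, Fintype (A i)] [∀ i, Fintype (B i)]
    (hn : 0 < n) (α : Bool → ((i : Fin n) → A i) → ℝ)
    (β : Bool → ((i : Fin n) → B i) → ℝ) (c : Bool)
    (p : Fin n → ((i : Fin n) → A i) → ((i : Fin n) → B i) → ℝ) : ℝ :=
  (1 / 2) * ∑ a : Bool,
    fid (fun y => ∑ x, α a x * p ⟨n - 1, Nat.sub_lt hn Nat.one_pos⟩ x y) (β (Bool.xor a c))

/-- Objective value of cheating Alice forcing outcome `c` in the quantum protocol. -/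
noncomputable def aliceObjQ (A B : Fin n → Type) [∀ i, Fintype (A i)] [∀ i, Fintype (B i)]
    (α : Bool → ((i : Fin n) → A i) → ℝ)
    (β : Bool → ((i : Fin n) → B i) → ℝ) (c : Bool)
    (sF : Bool → ((i : Fin n) → A i) → ((i : Fin n) → B i) → ℝ) : ℝ :=
  (1 / 2) * ∑ a : Bool, ∑ y, β (Bool.xor a c) y * fid (fun x => sF a x y) (α a)

/-- Objective value of cheating Bob forcing outcome `c` in the classical protocol. -/
noncomputable def bobObjC (A B : Fin n → Type) [∀ i, Fintype (A i)] [∀ i, Fintype (B i)]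
    (hn : 0 < n) (α : Bool → ((i : Fin n) → A i) → ℝ)
    (β : Bool → ((i : Fin n) → B i) → ℝ) (c : Bool)
    (p : Fin n → ((i : Fin n) → A i) → ((i : Fin n) → B i) → ℝ) : ℝ :=
  (1 / 2) * ∑ a : Bool, ∑ y ∈ univ.filter (fun y => β (Bool.xor a c) y ≠ 0),
      ∑ x, α a x * p ⟨n - 1, Nat.sub_lt hn Nat.one_pos⟩ x y

/-- Objective value of cheating Alice forcing outcome `c` in the classical protocol. -/
noncomputable def aliceObjC (A B : Fin n → Type) [∀ i, Fintype (A i)] [∀ i, Fintype (B i)]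
    (α : Bool → ((i : Fin n) → A i) → ℝ)
    (β : Bool → ((i : Fin n) → B i) → ℝ) (c : Bool)
    (sF : Bool → ((i : Fin n) → A i) → ((i : Fin n) → B i) → ℝ) : ℝ :=
  (1 / 2) * ∑ a : Bool, ∑ y, β (Bool.xor a c) y *
      ∑ x ∈ univ.filter (fun x => α a x ≠ 0), sF a x y

/-- The set of values of cheating Bob's quantum strategies for outcome `c`. -/
def bobValsQ (A B : Fin n → Type) [∀ i, Fintype (A i)] [∀ i, Fintype (B i)]
    (hn : 0 < n) (α : Bool → ((i : Fin n) → A i) → ℝ)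
    (β : Bool → ((i : Fin n) → B i) → ℝ) (c : Bool) : Set ℝ :=
  {v | ∃ p, MemBob A B p ∧ v = bobObjQ A B hn α β c p}

/-- The set of values of cheating Alice's quantum strategies for outcome `c`. -/
def aliceValsQ (A B : Fin n → Type) [∀ i, Fintype (A i)] [∀ i, Fintype (B i)]
    (hn : 0 < n) (α : Bool → ((i : Fin n) → A i) → ℝ)
    (β : Bool → ((i : Fin n) → B i) → ℝ) (c : Bool) : Set ℝ :=
  {v | ∃ s sF, MemAlice A B hn s sF ∧ v = aliceObjQ A B α β c sF}

/-- The set of values of cheating Bob's classical strategies for outcome `c`. -/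
def bobValsC (A B : Fin n → Type) [∀ i, Fintype (A i)] [∀ i, Fintype (B i)]
    (hn : 0 < n) (α : Bool → ((i : Fin n) → A i) → ℝ)
    (β : Bool → ((i : Fin n) → B i) → ℝ) (c : Bool) : Set ℝ :=
  {v | ∃ p, MemBob A B p ∧ v = bobObjC A B hn α β c p}

/-- The set of values of cheating Alice's classical strategies for outcome `c`. -/
def aliceValsC (A B : Fin n → Type) [∀ i, Fintype (A i)] [∀ i, Fintype (B i)]
    (hn : 0 < n) (α : Bool → ((i : Fin n) → A i) → ℝ)
    (β : Bool → ((i : Fin n) → B i) → ℝ) (c : Bool) : Set ℝ :=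
  {v | ∃ s sF, MemAlice A B hn s sF ∧ v = aliceObjC A B α β c sF}

end BCCF

namespace BCCF


section ExtremeAux
set_option linter.unusedSectionVars false
variable {n : ℕ} {A B : Fin n → Type} [∀ i, Fintype (A i)] [∀ i, Fintype (B i)]


lemma bob_le_sum {p : Fin n → ((i : Fin n) → A i) → ((i : Fin n) → B i) → ℝ}
    (hp : MemBob A B p) (j : Fin n) (x y) :
    p j x y ≤ ∑ b : B j, p j x (Function.update y j b) := by
  have h := Finset.single_le_sum (f := fun b : B j => p j x (Function.update y j b))
    (fun b _ => hp.1 j x _) (Finset.mem_univ (y j))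
  simpa [Function.update_eq_self] using h

lemma bob_le_one {p : Fin n → ((i : Fin n) → A i) → ((i : Fin n) → B i) → ℝ}
    (hp : MemBob A B p) (j : Fin n) (x y) : p j x y ≤ 1 := by
  suffices H : ∀ m : ℕ, ∀ j : Fin n, (j : ℕ) = m → ∀ x y, p j x y ≤ 1 from H j j rfl x y
  intro m
  induction m with
  | zero => intro j hj x y
            exact (bob_le_sum hp j x y).trans (le_of_eq (hp.2.2.1 j hj x y))
  | succ m ih =>
      intro j hj x y
      have hm : m < n := by have := j.isLt; omega
      have hs := hp.2.2.2 j ⟨m, hm⟩ (by simpa using hj) x y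
      exact (bob_le_sum hp j x y).trans (hs ▸ ih ⟨m, hm⟩ rfl x y)

/-- prefix condition -/
def preB (j : Fin n) (x0 : (i : Fin n) → A i) (y0 : (i : Fin n) → B i)
    (x : (i : Fin n) → A i) (y : (i : Fin n) → B i) : Prop :=
  (∀ i, i ≤ j → x i = x0 i) ∧ (∀ i, i ≤ j → y i = y0 i)

open scoped Classical in
noncomputable def dirB (p : Fin n → ((i : Fin n) → A i) → ((i : Fin n) → B i) → ℝ)
    (j : Fin n) (x0 : (i : Fin n) → A i) (y0 y1 : (i : Fin n) → B i) (v w : ℝ) :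
    Fin n → ((i : Fin n) → A i) → ((i : Fin n) → B i) → ℝ :=
  fun k x y =>
    if (j : ℕ) ≤ (k : ℕ) then
      ((if preB j x0 y0 x y then w else 0) - (if preB j x0 y1 x y then v else 0)) * p k x y
    else 0

lemma preB_congr {j k : Fin n} (hjk : (j : ℕ) ≤ (k : ℕ))
    {x0 x x' : (i : Fin n) → A i} {y0 y y' : (i : Fin n) → B i}
    (hx : ∀ i, i ≤ k → x i = x' i) (hy : ∀ i, i ≤ k → y i = y' i) :
    preB j x0 y0 x y ↔ preB j x0 y0 x' y' := by
  have hik : ∀ i : Fin n, i ≤ j → i ≤ k := fun i hi => le_trans hi (by exact hjk)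
  constructor
  · rintro ⟨h1, h2⟩
    exact ⟨fun i hi => (hx i (hik i hi)) ▸ h1 i hi, fun i hi => (hy i (hik i hi)) ▸ h2 i hi⟩
  · rintro ⟨h1, h2⟩
    exact ⟨fun i hi => (hx i (hik i hi)).trans (h1 i hi),
           fun i hi => (hy i (hik i hi)).trans (h2 i hi)⟩

lemma preB_update_self {j : Fin n} {x0 : (i : Fin n) → A i} {y0 : (i : Fin n) → B i}
    {x : (i : Fin n) → A i} {y : (i : Fin n) → B i} (b : B j) :
    preB j x0 y0 x (Function.update y j b) ↔
      ((∀ i, i ≤ j → x i = x0 i) ∧ (∀ i, i < j → y i = y0 i) ∧ b = y0 j) := by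
  constructor
  · rintro ⟨h1, h2⟩
    refine ⟨h1, fun i hi => ?_, ?_⟩
    · have := h2 i (le_of_lt hi)
      rwa [Function.update_of_ne (ne_of_lt hi)] at this
    · have := h2 j le_rfl
      rwa [Function.update_self] at this
  · rintro ⟨h1, h2, h3⟩
    refine ⟨h1, fun i hi => ?_⟩
    rcases eq_or_lt_of_le hi with h | h
    · subst h; rw [Function.update_self]; exact h3
    · rw [Function.update_of_ne (ne_of_lt h)]; exact h2 i h


lemma dirB_sum_j {p : Fin n → ((i : Fin n) → A i) → ((i : Fin n) → B i) → ℝ}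
    (hp : MemBob A B p) (j : Fin n) (x0 : (i : Fin n) → A i) (y0 : (i : Fin n) → B i)
    (b' : B j) (hb' : b' ≠ y0 j) (x : (i : Fin n) → A i) (y : (i : Fin n) → B i) :
    ∑ b : B j, dirB p j x0 y0 (Function.update y0 j b') (p j x0 y0)
      (p j x0 (Function.update y0 j b')) j x (Function.update y j b) = 0 := by
  classical
  set y1 := Function.update y0 j b' with hy1def
  set v := p j x0 y0 with hvdef
  set w := p j x0 y1 with hwdef
  have hy1lt : ∀ i : Fin n, i < j → y1 i = y0 i := fun i hi =>
    Function.update_of_ne (ne_of_lt hi) _ _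
  have hy1j : y1 j = b' := Function.update_self _ _ _
  set C := (∀ i, i ≤ j → x i = x0 i) ∧ (∀ i, i < j → y i = y0 i) with hCdef
  have key : ∀ b : B j,
      dirB p j x0 y0 y1 v w j x (Function.update y j b)
        = (if b = y0 j then (if C then w * v else 0) else 0)
          - (if b = b' then (if C then v * w else 0) else 0) := by
    intro b
    have h1 : preB j x0 y0 x (Function.update y j b) ↔ (C ∧ b = y0 j) := by
      rw [preB_update_self, hCdef, and_assoc]
    have h2 : preB j x0 y1 x (Function.update y j b) ↔ (C ∧ b = b') := by
      rw [preB_update_self, hCdef, and_assoc]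
      constructor
      · rintro ⟨ha, hb, hc⟩
        exact ⟨ha, fun i hi => (hb i hi).trans (hy1lt i hi), hc.trans hy1j⟩
      · rintro ⟨ha, hb, hc⟩
        exact ⟨ha, fun i hi => (hb i hi).trans (hy1lt i hi).symm, hc.trans hy1j.symm⟩
    unfold dirB
    rw [if_pos le_rfl]
    simp only [h1, h2]
    by_cases hC' : C
    · have hpv : p j x (Function.update y j (y0 j)) = v := by
        refine hp.2.1 j x x0 _ y0 hC'.1 (fun i hi => ?_)
        rcases eq_or_lt_of_le hi with h | h
        · subst h; rw [Function.update_self]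
        · rw [Function.update_of_ne (ne_of_lt h)]; exact hC'.2 i h
      have hpw : p j x (Function.update y j b') = w := by
        refine hp.2.1 j x x0 _ y1 hC'.1 (fun i hi => ?_)
        rcases eq_or_lt_of_le hi with h | h
        · subst h; exact (Function.update_self _ _ _).trans hy1j.symm
        · rw [Function.update_of_ne (ne_of_lt h)]
          exact (hC'.2 i h).trans (hy1lt i h).symm
      by_cases hb0 : b = y0 j
      · have hbb : ¬ b = b' := fun h => hb' (h.symm.trans hb0)
        rw [hb0]
        simp [hC', hb0, hbb, hpv, (show ¬ y0 j = b' from fun h => hb' h.symm)]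
      · by_cases hbb : b = b'
        · rw [hbb]
          simp [hC', hb0, hbb, hpw, hb']
        · simp [hC', hb0, hbb]
    · simp [hC']
  rw [Finset.sum_congr rfl (fun b _ => key b)]
  rw [Finset.sum_sub_distrib]
  simp [Finset.sum_ite_eq', mul_comm]

lemma dirB_sum_gt {p : Fin n → ((i : Fin n) → A i) → ((i : Fin n) → B i) → ℝ}
    (hp : MemBob A B p) (j : Fin n) (x0 : (i : Fin n) → A i) (y0 y1 : (i : Fin n) → B i)
    (v w : ℝ) (k m : Fin n) (hkm : (k : ℕ) = (m : ℕ) + 1) (hjm : (j : ℕ) ≤ (m : ℕ))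
    (x : (i : Fin n) → A i) (y : (i : Fin n) → B i) :
    ∑ b : B k, dirB p j x0 y0 y1 v w k x (Function.update y k b)
      = dirB p j x0 y0 y1 v w m x y := by
  classical
  have hjk : (j : ℕ) ≤ (k : ℕ) := by omega
  have hup : ∀ (z : (i : Fin n) → B i) (b : B k),
      (preB j x0 z x (Function.update y k b)) ↔ preB j x0 z x y := by
    intro z b
    refine preB_congr (le_refl (j : ℕ)) (fun i _ => rfl) (fun i hi => ?_)
    have hik : (i : ℕ) < (k : ℕ) := lt_of_le_of_lt (Fin.le_def.mp hi) (by omega)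
    exact Function.update_of_ne (ne_of_lt (Fin.lt_def.mpr hik)) _ _
  have key : ∀ b : B k,
      dirB p j x0 y0 y1 v w k x (Function.update y k b)
        = ((if preB j x0 y0 x y then w else 0) - (if preB j x0 y1 x y then v else 0))
          * p k x (Function.update y k b) := by
    intro b
    unfold dirB
    rw [if_pos hjk]
    simp only [hup]
  rw [Finset.sum_congr rfl (fun b _ => key b), ← Finset.mul_sum, hp.2.2.2 k m hkm x y]
  unfold dirB
  rw [if_pos hjm]


lemma memBob_pert {p : Fin n → ((i : Fin n) → A i) → ((i : Fin n) → B i) → ℝ}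
    (hp : MemBob A B p) (j : Fin n) (x0 : (i : Fin n) → A i) (y0 : (i : Fin n) → B i)
    (b' : B j) (hb' : b' ≠ y0 j) (t : ℝ) (ht : -(1/2) ≤ t) (ht' : t ≤ 1/2) :
    MemBob A B (fun k x y => p k x y +
      t * dirB p j x0 y0 (Function.update y0 j b') (p j x0 y0)
        (p j x0 (Function.update y0 j b')) k x y) := by
  classical
  set y1 := Function.update y0 j b' with hy1def
  set v := p j x0 y0 with hvdef
  set w := p j x0 y1 with hwdef
  have hy1j : y1 j = b' := Function.update_self _ _ _
  have hv0 : 0 ≤ v := hp.1 _ _ _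
  have hv1 : v ≤ 1 := bob_le_one hp _ _ _
  have hw0 : 0 ≤ w := hp.1 _ _ _
  have hw1 : w ≤ 1 := bob_le_one hp _ _ _
  have hmx : ∀ x y, preB j x0 y0 x y → preB j x0 y1 x y → False := by
    intro x y h1 h2
    exact hb' (((hy1j.symm.trans (h2.2 j le_rfl).symm).trans (h1.2 j le_rfl)))
  refine ⟨?_, ?_, ?_, ?_⟩
  · intro k x y
    dsimp only
    unfold dirB
    by_cases hjk : (j : ℕ) ≤ (k : ℕ)
    · rw [if_pos hjk]
      by_cases h1 : preB j x0 y0 x y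
      · have h2 : ¬ preB j x0 y1 x y := fun h => hmx x y h1 h
        rw [if_pos h1, if_neg h2]
        have hpk := hp.1 k x y
        have h12 : (0:ℝ) ≤ 1 + t * w := by nlinarith
        nlinarith [mul_nonneg hpk h12]
      · by_cases h2 : preB j x0 y1 x y
        · rw [if_neg h1, if_pos h2]
          have hpk := hp.1 k x y
          have h12 : (0:ℝ) ≤ 1 - t * v := by nlinarith
          nlinarith [mul_nonneg hpk h12]
        · rw [if_neg h1, if_neg h2]
          simpa using hp.1 k x y
    · rw [if_neg hjk]
      simpa using hp.1 k x y
  · intro k x x' y y' hx hy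
    dsimp only
    unfold dirB
    rw [hp.2.1 k x x' y y' hx hy]
    by_cases hjk : (j : ℕ) ≤ (k : ℕ)
    · simp only [if_pos hjk]
      have e1 : preB j x0 y0 x y ↔ preB j x0 y0 x' y' := preB_congr hjk hx hy
      have e2 : preB j x0 y1 x y ↔ preB j x0 y1 x' y' := preB_congr hjk hx hy
      simp only [e1, e2]
    · simp only [if_neg hjk]
  · intro k hk x y
    dsimp only
    rw [Finset.sum_add_distrib, ← Finset.mul_sum, hp.2.2.1 k hk x y]
    by_cases hjk : (j : ℕ) ≤ (k : ℕ)
    · have hjkeq : j = k := Fin.ext (by omega)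
      subst hjkeq
      rw [dirB_sum_j hp j x0 y0 b' hb' x y]
      ring
    · have hz : ∀ b : B k, dirB p j x0 y0 y1 v w k x (Function.update y k b) = 0 := by
        intro b; unfold dirB; rw [if_neg hjk]
      rw [Finset.sum_congr rfl (fun b _ => hz b), Finset.sum_const_zero]
      ring
  · intro k m hkm x y
    dsimp only
    rw [Finset.sum_add_distrib, ← Finset.mul_sum, hp.2.2.2 k m hkm x y]
    have : ∑ b : B k, dirB p j x0 y0 y1 v w k x (Function.update y k b)
        = dirB p j x0 y0 y1 v w m x y := by
      rcases lt_trichotomy ((j : ℕ)) ((k : ℕ)) with h | h | h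
      · exact dirB_sum_gt hp j x0 y0 y1 v w k m hkm (by omega) x y
      · have hjkeq : j = k := Fin.ext h
        subst hjkeq
        rw [dirB_sum_j hp j x0 y0 b' hb' x y]
        unfold dirB
        rw [if_neg (by omega)]
      · have hz : ∀ b : B k, dirB p j x0 y0 y1 v w k x (Function.update y k b) = 0 := by
          intro b; unfold dirB; rw [if_neg (by omega)]
        rw [Finset.sum_congr rfl (fun b _ => hz b), Finset.sum_const_zero]
        unfold dirB
        rw [if_neg (by omega)]
    rw [this]

lemma bob_frac_not_extreme {p : Fin n → ((i : Fin n) → A i) → ((i : Fin n) → B i) → ℝ}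
    (hp : MemBob A B p) (j : Fin n)
    (hmin : ∀ k : Fin n, (k : ℕ) < (j : ℕ) → ∀ x y, p k x y = 0 ∨ p k x y = 1)
    (x0 : (i : Fin n) → A i) (y0 : (i : Fin n) → B i)
    (h0 : p j x0 y0 ≠ 0) (h1 : p j x0 y0 ≠ 1) :
    p ∉ Set.extremePoints ℝ {q | MemBob A B q} := by
  classical
  have hv0 : 0 < p j x0 y0 := (hp.1 j x0 y0).lt_of_ne (Ne.symm h0)
  have hv1 : p j x0 y0 < 1 := (bob_le_one hp j x0 y0).lt_of_ne h1
  have hsum : ∑ b : B j, p j x0 (Function.update y0 j b) = 1 := by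
    rcases Nat.eq_zero_or_pos (j : ℕ) with hj | hj
    · exact hp.2.2.1 j hj x0 y0
    · have hm : (j : ℕ) - 1 < n := by have := j.isLt; omega
      have hs := hp.2.2.2 j ⟨(j : ℕ) - 1, hm⟩ (by simp; omega) x0 y0
      rcases hmin ⟨(j : ℕ) - 1, hm⟩ (by simp; omega) x0 y0 with h | h
      · exfalso
        have hb := bob_le_sum hp j x0 y0
        rw [hs, h] at hb
        linarith
      · rw [hs, h]
  obtain ⟨b', hb', hw0⟩ : ∃ b', b' ≠ y0 j ∧ 0 < p j x0 (Function.update y0 j b') := by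
    by_contra hcon
    push_neg at hcon
    have hz : ∀ b : B j, b ≠ y0 j → p j x0 (Function.update y0 j b) = 0 := fun b hb =>
      le_antisymm (hcon b hb) (hp.1 _ _ _)
    have hone := Fintype.sum_eq_single (y0 j)
      (f := fun b : B j => p j x0 (Function.update y0 j b)) hz
    rw [hsum] at hone
    simp only [Function.update_eq_self] at hone
    exact absurd hone.symm (ne_of_lt hv1)
  set d := dirB p j x0 y0 (Function.update y0 j b') (p j x0 y0)
    (p j x0 (Function.update y0 j b')) with hd
  have hq : ∀ t : ℝ, -(1/2) ≤ t → t ≤ 1/2 →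
      (fun k x y => p k x y + t * d k x y) ∈ {q | MemBob A B q} := fun t h h' =>
    memBob_pert hp j x0 y0 b' hb' t h h'
  have hpre2 : ¬ preB j x0 (Function.update y0 j b') x0 y0 := by
    intro h
    exact hb' ((h.2 j le_rfl).trans (Function.update_self _ _ _)).symm
  have hdjx : d j x0 y0 = p j x0 (Function.update y0 j b') * p j x0 y0 := by
    rw [hd]
    unfold dirB
    rw [if_pos le_rfl, if_pos ⟨fun i _ => rfl, fun i _ => rfl⟩, if_neg hpre2]
    ring
  intro hext
  obtain ⟨hmem, hkey⟩ := hext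
  have hseg : p ∈ openSegment ℝ (fun k x y => p k x y + (-(1/2) : ℝ) * d k x y)
      (fun k x y => p k x y + ((1/2) : ℝ) * d k x y) := by
    refine ⟨1/2, 1/2, by norm_num, by norm_num, by norm_num, ?_⟩
    funext k x y
    simp only [Pi.add_apply, Pi.smul_apply, smul_eq_mul]
    ring
  have h12 := hkey (hq (-(1/2)) le_rfl (by norm_num)) (hq (1/2) (by norm_num) le_rfl) hseg
  have heq := congrFun (congrFun (congrFun h12 j) x0) y0
  rw [hdjx] at heq
  nlinarith [mul_pos hw0 hv0]


lemma bob_bool_extreme {p : Fin n → ((i : Fin n) → A i) → ((i : Fin n) → B i) → ℝ}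
    (hp : MemBob A B p) (h01 : ∀ j x y, p j x y = 0 ∨ p j x y = 1) :
    p ∈ Set.extremePoints ℝ {q | MemBob A B q} := by
  refine ⟨hp, ?_⟩
  intro q1 hq1 q2 hq2 hseg
  obtain ⟨a, b, ha, hb, hab, hcomb⟩ := hseg
  have hpt : ∀ j x y, q1 j x y = p j x y ∧ q2 j x y = p j x y := by
    intro j x y
    have hc := congrFun (congrFun (congrFun hcomb j) x) y
    simp only [Pi.add_apply, Pi.smul_apply, smul_eq_mul] at hc
    have h10 := hq1.1 j x y; have h11 := bob_le_one hq1 j x y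
    have h20 := hq2.1 j x y; have h21 := bob_le_one hq2 j x y
    rcases h01 j x y with h | h
    · rw [h] at hc
      constructor <;>
        nlinarith [mul_nonneg ha.le h10, mul_nonneg hb.le h20, mul_pos ha hb]
    · rw [h] at hc
      constructor <;>
        nlinarith [mul_nonneg ha.le (sub_nonneg.mpr h11),
          mul_nonneg hb.le (sub_nonneg.mpr h21), mul_pos ha hb]
  exact funext fun j => funext fun x => funext fun y => (hpt j x y).1

variable {hn : 0 < n}

lemma alice_le_sum {s : Fin n → ((i : Fin n) → A i) → ((i : Fin n) → B i) → ℝ}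
    {sF : Bool → ((i : Fin n) → A i) → ((i : Fin n) → B i) → ℝ}
    (hs : MemAlice A B hn s sF) (j : Fin n) (x y) :
    s j x y ≤ ∑ a : A j, s j (Function.update x j a) y := by
  have h := Finset.single_le_sum (f := fun a : A j => s j (Function.update x j a) y)
    (fun a _ => hs.1 j _ y) (Finset.mem_univ (x j))
  simpa [Function.update_eq_self] using h

lemma alice_le_one {s : Fin n → ((i : Fin n) → A i) → ((i : Fin n) → B i) → ℝ}
    {sF : Bool → ((i : Fin n) → A i) → ((i : Fin n) → B i) → ℝ}
    (hs : MemAlice A B hn s sF) (j : Fin n) (x y) : s j x y ≤ 1 := by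
  suffices H : ∀ m : ℕ, ∀ j : Fin n, (j : ℕ) = m → ∀ x y, s j x y ≤ 1 from H j j rfl x y
  intro m
  induction m with
  | zero => intro j hj x y
            exact (alice_le_sum hs j x y).trans (le_of_eq (hs.2.2.2.1 j hj x y))
  | succ m ih =>
      intro j hj x y
      have hm : m < n := by have := j.isLt; omega
      have h2 := hs.2.2.2.2.1 j ⟨m, hm⟩ (by simpa using hj) x y
      exact (alice_le_sum hs j x y).trans (h2 ▸ ih ⟨m, hm⟩ rfl x y)

lemma aliceF_le {s : Fin n → ((i : Fin n) → A i) → ((i : Fin n) → B i) → ℝ}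
    {sF : Bool → ((i : Fin n) → A i) → ((i : Fin n) → B i) → ℝ}
    (hs : MemAlice A B hn s sF) (a : Bool) (x y) :
    sF a x y ≤ s ⟨n - 1, Nat.sub_lt hn Nat.one_pos⟩ x y := by
  have h := hs.2.2.2.2.2 x y
  have h0 := hs.2.1 false x y
  have h1 := hs.2.1 true x y
  cases a <;> linarith

lemma aliceF_le_one {s : Fin n → ((i : Fin n) → A i) → ((i : Fin n) → B i) → ℝ}
    {sF : Bool → ((i : Fin n) → A i) → ((i : Fin n) → B i) → ℝ}
    (hs : MemAlice A B hn s sF) (a : Bool) (x y) : sF a x y ≤ 1 :=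
  (aliceF_le hs a x y).trans (alice_le_one hs _ x y)

/-- Alice prefix condition -/
def preA (j : Fin n) (x0 : (i : Fin n) → A i) (y0 : (i : Fin n) → B i)
    (x : (i : Fin n) → A i) (y : (i : Fin n) → B i) : Prop :=
  (∀ i, i ≤ j → x i = x0 i) ∧ (∀ i, i < j → y i = y0 i)

open scoped Classical in
noncomputable def dirA (s : Fin n → ((i : Fin n) → A i) → ((i : Fin n) → B i) → ℝ)
    (j : Fin n) (x0 x1 : (i : Fin n) → A i) (y0 : (i : Fin n) → B i) (v w : ℝ) :
    Fin n → ((i : Fin n) → A i) → ((i : Fin n) → B i) → ℝ :=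
  fun k x y =>
    if (j : ℕ) ≤ (k : ℕ) then
      ((if preA j x0 y0 x y then w else 0) - (if preA j x1 y0 x y then v else 0)) * s k x y
    else 0

open scoped Classical in
noncomputable def dirAF (sF : Bool → ((i : Fin n) → A i) → ((i : Fin n) → B i) → ℝ)
    (j : Fin n) (x0 x1 : (i : Fin n) → A i) (y0 : (i : Fin n) → B i) (v w : ℝ) :
    Bool → ((i : Fin n) → A i) → ((i : Fin n) → B i) → ℝ :=
  fun a x y =>
    ((if preA j x0 y0 x y then w else 0) - (if preA j x1 y0 x y then v else 0)) * sF a x y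

lemma preA_congr {j k : Fin n} (hjk : (j : ℕ) ≤ (k : ℕ))
    {x0 x x' : (i : Fin n) → A i} {y0 y y' : (i : Fin n) → B i}
    (hx : ∀ i, i ≤ k → x i = x' i) (hy : ∀ i, i < k → y i = y' i) :
    preA j x0 y0 x y ↔ preA j x0 y0 x' y' := by
  have hik : ∀ i : Fin n, i ≤ j → i ≤ k := fun i hi => le_trans hi hjk
  have hik' : ∀ i : Fin n, i < j → i < k := fun i hi => lt_of_lt_of_le hi hjk
  constructor
  · rintro ⟨h1, h2⟩
    exact ⟨fun i hi => (hx i (hik i hi)) ▸ h1 i hi, fun i hi => (hy i (hik' i hi)) ▸ h2 i hi⟩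
  · rintro ⟨h1, h2⟩
    exact ⟨fun i hi => (hx i (hik i hi)).trans (h1 i hi),
           fun i hi => (hy i (hik' i hi)).trans (h2 i hi)⟩

lemma preA_update_self {j : Fin n} {x0 : (i : Fin n) → A i} {y0 : (i : Fin n) → B i}
    {x : (i : Fin n) → A i} {y : (i : Fin n) → B i} (a : A j) :
    preA j x0 y0 (Function.update x j a) y ↔
      (((∀ i, i < j → x i = x0 i) ∧ (∀ i, i < j → y i = y0 i)) ∧ a = x0 j) := by
  constructor
  · rintro ⟨h1, h2⟩
    refine ⟨⟨fun i hi => ?_, h2⟩, ?_⟩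
    · have := h1 i (le_of_lt hi)
      rwa [Function.update_of_ne (ne_of_lt hi)] at this
    · have := h1 j le_rfl
      rwa [Function.update_self] at this
  · rintro ⟨⟨h1, h2⟩, h3⟩
    refine ⟨fun i hi => ?_, h2⟩
    rcases eq_or_lt_of_le hi with h | h
    · subst h; rw [Function.update_self]; exact h3
    · rw [Function.update_of_ne (ne_of_lt h)]; exact h1 i h


lemma dirA_sum_j {s : Fin n → ((i : Fin n) → A i) → ((i : Fin n) → B i) → ℝ}
    {sF : Bool → ((i : Fin n) → A i) → ((i : Fin n) → B i) → ℝ}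
    (hs : MemAlice A B hn s sF) (j : Fin n) (x0 : (i : Fin n) → A i) (y0 : (i : Fin n) → B i)
    (a' : A j) (ha' : a' ≠ x0 j) (x : (i : Fin n) → A i) (y : (i : Fin n) → B i) :
    ∑ a : A j, dirA s j x0 (Function.update x0 j a') y0 (s j x0 y0)
      (s j (Function.update x0 j a') y0) j (Function.update x j a) y = 0 := by
  classical
  set x1 := Function.update x0 j a' with hx1def
  set v := s j x0 y0 with hvdef
  set w := s j x1 y0 with hwdef
  have hx1lt : ∀ i : Fin n, i < j → x1 i = x0 i := fun i hi =>
    Function.update_of_ne (ne_of_lt hi) _ _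
  have hx1j : x1 j = a' := Function.update_self _ _ _
  set C := (∀ i, i < j → x i = x0 i) ∧ (∀ i, i < j → y i = y0 i) with hCdef
  have key : ∀ a : A j,
      dirA s j x0 x1 y0 v w j (Function.update x j a) y
        = (if a = x0 j then (if C then w * v else 0) else 0)
          - (if a = a' then (if C then v * w else 0) else 0) := by
    intro a
    have h1 : preA j x0 y0 (Function.update x j a) y ↔ (C ∧ a = x0 j) := by
      rw [preA_update_self, hCdef]
    have h2 : preA j x1 y0 (Function.update x j a) y ↔ (C ∧ a = a') := by
      rw [preA_update_self, hCdef]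
      constructor
      · rintro ⟨⟨ha, hb⟩, hc⟩
        exact ⟨⟨fun i hi => (ha i hi).trans (hx1lt i hi), hb⟩, hc.trans hx1j⟩
      · rintro ⟨⟨ha, hb⟩, hc⟩
        exact ⟨⟨fun i hi => (ha i hi).trans (hx1lt i hi).symm, hb⟩, hc.trans hx1j.symm⟩
    unfold dirA
    rw [if_pos le_rfl]
    simp only [h1, h2]
    by_cases hC' : C
    · have hpv : s j (Function.update x j (x0 j)) y = v := by
        refine hs.2.2.1 j _ x0 y y0 (fun i hi => ?_) hC'.2
        rcases eq_or_lt_of_le hi with h | h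
        · subst h; rw [Function.update_self]
        · rw [Function.update_of_ne (ne_of_lt h)]; exact hC'.1 i h
      have hpw : s j (Function.update x j a') y = w := by
        refine hs.2.2.1 j _ x1 y y0 (fun i hi => ?_) hC'.2
        rcases eq_or_lt_of_le hi with h | h
        · subst h; exact (Function.update_self _ _ _).trans hx1j.symm
        · rw [Function.update_of_ne (ne_of_lt h)]
          exact (hC'.1 i h).trans (hx1lt i h).symm
      by_cases hb0 : a = x0 j
      · have hbb : ¬ a = a' := fun h => ha' (h.symm.trans hb0)
        rw [hb0]
        simp [hC', hb0, hbb, hpv, (show ¬ x0 j = a' from fun h => ha' h.symm)]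
      · by_cases hbb : a = a'
        · rw [hbb]
          simp [hC', hb0, hbb, hpw, ha']
        · simp [hC', hb0, hbb]
    · simp [hC']
  rw [Finset.sum_congr rfl (fun a _ => key a)]
  rw [Finset.sum_sub_distrib]
  simp [Finset.sum_ite_eq', mul_comm]

lemma dirA_sum_gt {s : Fin n → ((i : Fin n) → A i) → ((i : Fin n) → B i) → ℝ}
    {sF : Bool → ((i : Fin n) → A i) → ((i : Fin n) → B i) → ℝ}
    (hs : MemAlice A B hn s sF) (j : Fin n) (x0 x1 : (i : Fin n) → A i)
    (y0 : (i : Fin n) → B i)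
    (v w : ℝ) (k m : Fin n) (hkm : (k : ℕ) = (m : ℕ) + 1) (hjm : (j : ℕ) ≤ (m : ℕ))
    (x : (i : Fin n) → A i) (y : (i : Fin n) → B i) :
    ∑ a : A k, dirA s j x0 x1 y0 v w k (Function.update x k a) y
      = dirA s j x0 x1 y0 v w m x y := by
  classical
  have hjk : (j : ℕ) ≤ (k : ℕ) := by omega
  have hup : ∀ (z : (i : Fin n) → A i) (a : A k),
      (preA j z y0 (Function.update x k a) y) ↔ preA j z y0 x y := by
    intro z a
    refine preA_congr (le_refl (j : ℕ)) (fun i hi => ?_) (fun i _ => rfl)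
    have hik : (i : ℕ) < (k : ℕ) := lt_of_le_of_lt (Fin.le_def.mp hi) (by omega)
    exact Function.update_of_ne (ne_of_lt (Fin.lt_def.mpr hik)) _ _
  have key : ∀ a : A k,
      dirA s j x0 x1 y0 v w k (Function.update x k a) y
        = ((if preA j x0 y0 x y then w else 0) - (if preA j x1 y0 x y then v else 0))
          * s k (Function.update x k a) y := by
    intro a
    unfold dirA
    rw [if_pos hjk]
    simp only [hup]
  rw [Finset.sum_congr rfl (fun a _ => key a), ← Finset.mul_sum, hs.2.2.2.2.1 k m hkm x y]
  unfold dirA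
  rw [if_pos hjm]

lemma memAlice_pert {s : Fin n → ((i : Fin n) → A i) → ((i : Fin n) → B i) → ℝ}
    {sF : Bool → ((i : Fin n) → A i) → ((i : Fin n) → B i) → ℝ}
    (hs : MemAlice A B hn s sF) (j : Fin n) (x0 : (i : Fin n) → A i) (y0 : (i : Fin n) → B i)
    (a' : A j) (ha' : a' ≠ x0 j) (t : ℝ) (ht : -(1/2) ≤ t) (ht' : t ≤ 1/2) :
    MemAlice A B hn (fun k x y => s k x y +
      t * dirA s j x0 (Function.update x0 j a') y0 (s j x0 y0)
        (s j (Function.update x0 j a') y0) k x y)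
      (fun a x y => sF a x y +
      t * dirAF sF j x0 (Function.update x0 j a') y0 (s j x0 y0)
        (s j (Function.update x0 j a') y0) a x y) := by
  classical
  set x1 := Function.update x0 j a' with hx1def
  set v := s j x0 y0 with hvdef
  set w := s j x1 y0 with hwdef
  have hx1j : x1 j = a' := Function.update_self _ _ _
  have hv0 : 0 ≤ v := hs.1 _ _ _
  have hv1 : v ≤ 1 := alice_le_one hs _ _ _
  have hw0 : 0 ≤ w := hs.1 _ _ _
  have hw1 : w ≤ 1 := alice_le_one hs _ _ _
  have hmx : ∀ x y, preA j x0 y0 x y → preA j x1 y0 x y → False := by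
    intro x y h1 h2
    exact ha' (((hx1j.symm.trans (h2.1 j le_rfl).symm).trans (h1.1 j le_rfl)))
  refine ⟨?_, ?_, ?_, ?_, ?_, ?_⟩
  · intro k x y
    dsimp only
    unfold dirA
    by_cases hjk : (j : ℕ) ≤ (k : ℕ)
    · rw [if_pos hjk]
      by_cases h1 : preA j x0 y0 x y
      · have h2 : ¬ preA j x1 y0 x y := fun h => hmx x y h1 h
        rw [if_pos h1, if_neg h2]
        have hpk := hs.1 k x y
        have h12 : (0:ℝ) ≤ 1 + t * w := by nlinarith
        nlinarith [mul_nonneg hpk h12]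
      · by_cases h2 : preA j x1 y0 x y
        · rw [if_neg h1, if_pos h2]
          have hpk := hs.1 k x y
          have h12 : (0:ℝ) ≤ 1 - t * v := by nlinarith
          nlinarith [mul_nonneg hpk h12]
        · rw [if_neg h1, if_neg h2]
          simpa using hs.1 k x y
    · rw [if_neg hjk]
      simpa using hs.1 k x y
  · intro a x y
    dsimp only
    unfold dirAF
    by_cases h1 : preA j x0 y0 x y
    · have h2 : ¬ preA j x1 y0 x y := fun h => hmx x y h1 h
      rw [if_pos h1, if_neg h2]
      have hpk := hs.2.1 a x y
      have h12 : (0:ℝ) ≤ 1 + t * w := by nlinarith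
      nlinarith [mul_nonneg hpk h12]
    · by_cases h2 : preA j x1 y0 x y
      · rw [if_neg h1, if_pos h2]
        have hpk := hs.2.1 a x y
        have h12 : (0:ℝ) ≤ 1 - t * v := by nlinarith
        nlinarith [mul_nonneg hpk h12]
      · rw [if_neg h1, if_neg h2]
        simpa using hs.2.1 a x y
  · intro k x x' y y' hx hy
    dsimp only
    unfold dirA
    rw [hs.2.2.1 k x x' y y' hx hy]
    by_cases hjk : (j : ℕ) ≤ (k : ℕ)
    · simp only [if_pos hjk]
      have e1 : preA j x0 y0 x y ↔ preA j x0 y0 x' y' := preA_congr hjk hx hy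
      have e2 : preA j x1 y0 x y ↔ preA j x1 y0 x' y' := preA_congr hjk hx hy
      simp only [e1, e2]
    · simp only [if_neg hjk]
  · intro k hk x y
    dsimp only
    rw [Finset.sum_add_distrib, ← Finset.mul_sum, hs.2.2.2.1 k hk x y]
    by_cases hjk : (j : ℕ) ≤ (k : ℕ)
    · have hjkeq : j = k := Fin.ext (by omega)
      subst hjkeq
      rw [dirA_sum_j hs j x0 y0 a' ha' x y]
      ring
    · have hz : ∀ a : A k, dirA s j x0 x1 y0 v w k (Function.update x k a) y = 0 := by
        intro a; unfold dirA; rw [if_neg hjk]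
      rw [Finset.sum_congr rfl (fun a _ => hz a), Finset.sum_const_zero]
      ring
  · intro k m hkm x y
    dsimp only
    rw [Finset.sum_add_distrib, ← Finset.mul_sum, hs.2.2.2.2.1 k m hkm x y]
    have hsum : ∑ a : A k, dirA s j x0 x1 y0 v w k (Function.update x k a) y
        = dirA s j x0 x1 y0 v w m x y := by
      rcases lt_trichotomy ((j : ℕ)) ((k : ℕ)) with h | h | h
      · exact dirA_sum_gt hs j x0 x1 y0 v w k m hkm (by omega) x y
      · have hjkeq : j = k := Fin.ext h
        subst hjkeq
        rw [dirA_sum_j hs j x0 y0 a' ha' x y]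
        unfold dirA
        rw [if_neg (by omega)]
      · have hz : ∀ a : A k, dirA s j x0 x1 y0 v w k (Function.update x k a) y = 0 := by
          intro a; unfold dirA; rw [if_neg (by omega)]
        rw [Finset.sum_congr rfl (fun a _ => hz a), Finset.sum_const_zero]
        unfold dirA
        rw [if_neg (by omega)]
    rw [hsum]
  · intro x y
    dsimp only
    unfold dirA dirAF
    have hl := hs.2.2.2.2.2 x y
    have hjn : (j : ℕ) ≤ ((⟨n - 1, Nat.sub_lt hn Nat.one_pos⟩ : Fin n) : ℕ) := by
      have := j.isLt; simp; omega
    rw [if_pos hjn, ← hl]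
    ring


lemma aliceS_frac_not_extreme {s : Fin n → ((i : Fin n) → A i) → ((i : Fin n) → B i) → ℝ}
    {sF : Bool → ((i : Fin n) → A i) → ((i : Fin n) → B i) → ℝ}
    (hs : MemAlice A B hn s sF) (j : Fin n)
    (hmin : ∀ k : Fin n, (k : ℕ) < (j : ℕ) → ∀ x y, s k x y = 0 ∨ s k x y = 1)
    (x0 : (i : Fin n) → A i) (y0 : (i : Fin n) → B i)
    (h0 : s j x0 y0 ≠ 0) (h1 : s j x0 y0 ≠ 1) :
    (s, sF) ∉ Set.extremePoints ℝ
      {u : (Fin n → ((i : Fin n) → A i) → ((i : Fin n) → B i) → ℝ) ×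
           (Bool → ((i : Fin n) → A i) → ((i : Fin n) → B i) → ℝ) |
        MemAlice A B hn u.1 u.2} := by
  classical
  have hv0 : 0 < s j x0 y0 := (hs.1 j x0 y0).lt_of_ne (Ne.symm h0)
  have hv1 : s j x0 y0 < 1 := (alice_le_one hs j x0 y0).lt_of_ne h1
  have hsum : ∑ a : A j, s j (Function.update x0 j a) y0 = 1 := by
    rcases Nat.eq_zero_or_pos (j : ℕ) with hj | hj
    · exact hs.2.2.2.1 j hj x0 y0
    · have hm : (j : ℕ) - 1 < n := by have := j.isLt; omega
      have hss := hs.2.2.2.2.1 j ⟨(j : ℕ) - 1, hm⟩ (by simp; omega) x0 y0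
      rcases hmin ⟨(j : ℕ) - 1, hm⟩ (by simp; omega) x0 y0 with h | h
      · exfalso
        have hb := alice_le_sum hs j x0 y0
        rw [hss, h] at hb
        linarith
      · rw [hss, h]
  obtain ⟨a', ha', hw0⟩ : ∃ a', a' ≠ x0 j ∧ 0 < s j (Function.update x0 j a') y0 := by
    by_contra hcon
    push_neg at hcon
    have hz : ∀ a : A j, a ≠ x0 j → s j (Function.update x0 j a) y0 = 0 := fun a ha =>
      le_antisymm (hcon a ha) (hs.1 _ _ _)
    have hone := Fintype.sum_eq_single (x0 j)
      (f := fun a : A j => s j (Function.update x0 j a) y0) hz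
    rw [hsum] at hone
    simp only [Function.update_eq_self] at hone
    exact absurd hone.symm (ne_of_lt hv1)
  set d := dirA s j x0 (Function.update x0 j a') y0 (s j x0 y0)
    (s j (Function.update x0 j a') y0) with hd
  set dF := dirAF sF j x0 (Function.update x0 j a') y0 (s j x0 y0)
    (s j (Function.update x0 j a') y0) with hdF
  have hq : ∀ t : ℝ, -(1/2) ≤ t → t ≤ 1/2 →
      ((fun k x y => s k x y + t * d k x y, fun a x y => sF a x y + t * dF a x y) :
        (Fin n → ((i : Fin n) → A i) → ((i : Fin n) → B i) → ℝ) ×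
        (Bool → ((i : Fin n) → A i) → ((i : Fin n) → B i) → ℝ)) ∈
      {u : (Fin n → ((i : Fin n) → A i) → ((i : Fin n) → B i) → ℝ) ×
           (Bool → ((i : Fin n) → A i) → ((i : Fin n) → B i) → ℝ) |
        MemAlice A B hn u.1 u.2} := fun t h h' =>
    memAlice_pert hs j x0 y0 a' ha' t h h'
  have hpre2 : ¬ preA j (Function.update x0 j a') y0 x0 y0 := by
    intro h
    exact ha' ((h.1 j le_rfl).trans (Function.update_self _ _ _)).symm
  have hdjx : d j x0 y0 = s j (Function.update x0 j a') y0 * s j x0 y0 := by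
    rw [hd]
    unfold dirA
    rw [if_pos le_rfl, if_pos ⟨fun i _ => rfl, fun i _ => rfl⟩, if_neg hpre2]
    ring
  intro hext
  obtain ⟨hmem, hkey⟩ := hext
  have hseg : (s, sF) ∈ openSegment ℝ
      ((fun k x y => s k x y + (-(1/2) : ℝ) * d k x y,
        fun a x y => sF a x y + (-(1/2) : ℝ) * dF a x y) :
        (Fin n → ((i : Fin n) → A i) → ((i : Fin n) → B i) → ℝ) ×
        (Bool → ((i : Fin n) → A i) → ((i : Fin n) → B i) → ℝ))
      ((fun k x y => s k x y + ((1/2) : ℝ) * d k x y,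
        fun a x y => sF a x y + ((1/2) : ℝ) * dF a x y)) := by
    refine ⟨1/2, 1/2, by norm_num, by norm_num, by norm_num, ?_⟩
    refine Prod.ext ?_ ?_ <;> funext u x y <;>
      simp only [Prod.fst_add, Prod.snd_add, Prod.smul_fst, Prod.smul_snd,
        Pi.add_apply, Pi.smul_apply, smul_eq_mul] <;> ring
  have h12 := hkey (hq (-(1/2)) le_rfl (by norm_num)) (hq (1/2) (by norm_num) le_rfl) hseg
  have heq := congrFun (congrFun (congrFun (congrArg Prod.fst h12) j) x0) y0
  simp only at heq
  rw [hdjx] at heq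
  nlinarith [mul_pos hw0 hv0]

lemma aliceF_frac_not_extreme {s : Fin n → ((i : Fin n) → A i) → ((i : Fin n) → B i) → ℝ}
    {sF : Bool → ((i : Fin n) → A i) → ((i : Fin n) → B i) → ℝ}
    (hs : MemAlice A B hn s sF)
    (hsb : ∀ j x y, s j x y = 0 ∨ s j x y = 1)
    (a : Bool) (x0 : (i : Fin n) → A i) (y0 : (i : Fin n) → B i)
    (h0 : sF a x0 y0 ≠ 0) (h1 : sF a x0 y0 ≠ 1) :
    (s, sF) ∉ Set.extremePoints ℝ
      {u : (Fin n → ((i : Fin n) → A i) → ((i : Fin n) → B i) → ℝ) ×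
           (Bool → ((i : Fin n) → A i) → ((i : Fin n) → B i) → ℝ) |
        MemAlice A B hn u.1 u.2} := by
  classical
  have hv0 : 0 < sF a x0 y0 := (hs.2.1 a x0 y0).lt_of_ne (Ne.symm h0)
  have hv1 : sF a x0 y0 < 1 := (aliceF_le_one hs a x0 y0).lt_of_ne h1
  have hsn : s ⟨n - 1, Nat.sub_lt hn Nat.one_pos⟩ x0 y0 = 1 := by
    rcases hsb ⟨n - 1, Nat.sub_lt hn Nat.one_pos⟩ x0 y0 with h | h
    · exfalso
      have := aliceF_le hs a x0 y0
      rw [h] at this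
      linarith
    · exact h
  have h6 := hs.2.2.2.2.2 x0 y0
  rw [hsn] at h6
  have hpos : 0 < sF false x0 y0 ∧ 0 < sF true x0 y0 := by
    cases a
    · exact ⟨hv0, by linarith⟩
    · exact ⟨by linarith, hv0⟩
  set c := min (sF false x0 y0) (sF true x0 y0) with hc
  have hc0 : 0 < c := lt_min hpos.1 hpos.2
  have hcf : c ≤ sF false x0 y0 := min_le_left _ _
  have hct : c ≤ sF true x0 y0 := min_le_right _ _
  have hq : ∀ t : ℝ, -1 ≤ t → t ≤ 1 →
      ((s, fun b x y => sF b x y +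
          t * (if x = x0 ∧ y = y0 then (if b = true then -c else c) else 0)) :
        (Fin n → ((i : Fin n) → A i) → ((i : Fin n) → B i) → ℝ) ×
        (Bool → ((i : Fin n) → A i) → ((i : Fin n) → B i) → ℝ)) ∈
      {u : (Fin n → ((i : Fin n) → A i) → ((i : Fin n) → B i) → ℝ) ×
           (Bool → ((i : Fin n) → A i) → ((i : Fin n) → B i) → ℝ) |
        MemAlice A B hn u.1 u.2} := by
    intro t ht ht'
    refine ⟨hs.1, ?_, hs.2.2.1, hs.2.2.2.1, hs.2.2.2.2.1, ?_⟩
    · intro b x y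
      dsimp only
      by_cases hpt : x = x0 ∧ y = y0
      · rw [if_pos hpt]
        obtain ⟨hx, hy⟩ := hpt
        subst hx; subst hy
        cases b
        · norm_num
          nlinarith
        · norm_num
          nlinarith
      · rw [if_neg hpt]
        simpa using hs.2.1 b x y
    · intro x y
      dsimp only
      have hl := hs.2.2.2.2.2 x y
      by_cases hpt : x = x0 ∧ y = y0
      · simp only [if_pos hpt]
        norm_num
        linarith
      · simp only [if_neg hpt]
        linarith
  intro hext
  obtain ⟨hmem, hkey⟩ := hext
  have hseg : (s, sF) ∈ openSegment ℝ
      ((s, fun b x y => sF b x y +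
          (-1 : ℝ) * (if x = x0 ∧ y = y0 then (if b = true then -c else c) else 0)) :
        (Fin n → ((i : Fin n) → A i) → ((i : Fin n) → B i) → ℝ) ×
        (Bool → ((i : Fin n) → A i) → ((i : Fin n) → B i) → ℝ))
      ((s, fun b x y => sF b x y +
          (1 : ℝ) * (if x = x0 ∧ y = y0 then (if b = true then -c else c) else 0))) := by
    refine ⟨1/2, 1/2, by norm_num, by norm_num, by norm_num, ?_⟩
    refine Prod.ext ?_ ?_ <;> funext u x y <;>
      simp only [Prod.fst_add, Prod.snd_add, Prod.smul_fst, Prod.smul_snd,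
        Pi.add_apply, Pi.smul_apply, smul_eq_mul] <;> ring
  have h12 := hkey (hq (-1) le_rfl (by norm_num)) (hq 1 (by norm_num) le_rfl) hseg
  have heq := congrFun (congrFun (congrFun (congrArg Prod.snd h12) false) x0) y0
  simp only at heq
  simp at heq
  linarith

lemma alice_bool_extreme {s : Fin n → ((i : Fin n) → A i) → ((i : Fin n) → B i) → ℝ}
    {sF : Bool → ((i : Fin n) → A i) → ((i : Fin n) → B i) → ℝ}
    (hs : MemAlice A B hn s sF)
    (h01 : ∀ j x y, s j x y = 0 ∨ s j x y = 1)
    (h01F : ∀ a x y, sF a x y = 0 ∨ sF a x y = 1) :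
    (s, sF) ∈ Set.extremePoints ℝ
      {u : (Fin n → ((i : Fin n) → A i) → ((i : Fin n) → B i) → ℝ) ×
           (Bool → ((i : Fin n) → A i) → ((i : Fin n) → B i) → ℝ) |
        MemAlice A B hn u.1 u.2} := by
  refine ⟨hs, ?_⟩
  intro q1 hq1 q2 hq2 hseg
  obtain ⟨a, b, ha, hb, hab, hcomb⟩ := hseg
  have hm1 : MemAlice A B hn q1.1 q1.2 := hq1
  have hm2 : MemAlice A B hn q2.1 q2.2 := hq2
  have hc1 := congrArg Prod.fst hcomb
  have hc2 := congrArg Prod.snd hcomb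
  simp only [Prod.fst_add, Prod.snd_add, Prod.smul_fst, Prod.smul_snd] at hc1 hc2
  have hpt1 : ∀ j x y, q1.1 j x y = s j x y ∧ q2.1 j x y = s j x y := by
    intro j x y
    have hc := congrFun (congrFun (congrFun hc1 j) x) y
    simp only [Pi.add_apply, Pi.smul_apply, smul_eq_mul] at hc
    have h10 := hm1.1 j x y; have h11 := alice_le_one hm1 j x y
    have h20 := hm2.1 j x y; have h21 := alice_le_one hm2 j x y
    rcases h01 j x y with h | h
    · rw [h] at hc
      constructor <;>
        nlinarith [mul_nonneg ha.le h10, mul_nonneg hb.le h20, mul_pos ha hb]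
    · rw [h] at hc
      constructor <;>
        nlinarith [mul_nonneg ha.le (sub_nonneg.mpr h11),
          mul_nonneg hb.le (sub_nonneg.mpr h21), mul_pos ha hb]
  have hpt2 : ∀ c x y, q1.2 c x y = sF c x y ∧ q2.2 c x y = sF c x y := by
    intro c x y
    have hc := congrFun (congrFun (congrFun hc2 c) x) y
    simp only [Pi.add_apply, Pi.smul_apply, smul_eq_mul] at hc
    have h10 := hm1.2.1 c x y; have h11 := aliceF_le_one hm1 c x y
    have h20 := hm2.2.1 c x y; have h21 := aliceF_le_one hm2 c x y
    rcases h01F c x y with h | h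
    · rw [h] at hc
      constructor <;>
        nlinarith [mul_nonneg ha.le h10, mul_nonneg hb.le h20, mul_pos ha hb]
    · rw [h] at hc
      constructor <;>
        nlinarith [mul_nonneg ha.le (sub_nonneg.mpr h11),
          mul_nonneg hb.le (sub_nonneg.mpr h21), mul_pos ha hb]
  refine Prod.ext ?_ ?_
  · exact funext fun j => funext fun x => funext fun y => (hpt1 j x y).1
  · exact funext fun c => funext fun x => funext fun y => (hpt2 c x y).1



end ExtremeAux

theorem extreme_points_boolean {n : ℕ} (hn : 0 < n) (A B : Fin n → Type)
    [∀ i, Fintype (A i)] [∀ i, Nonempty (A i)] [∀ i, Fintype (B i)] [∀ i, Nonempty (B i)] :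
    (∀ p : Fin n → ((i : Fin n) → A i) → ((i : Fin n) → B i) → ℝ,
      p ∈ Set.extremePoints ℝ {q | MemBob A B q} ↔
        (MemBob A B p ∧ ∀ j x y, p j x y = 0 ∨ p j x y = 1)) ∧
    (∀ t : (Fin n → ((i : Fin n) → A i) → ((i : Fin n) → B i) → ℝ) ×
           (Bool → ((i : Fin n) → A i) → ((i : Fin n) → B i) → ℝ),
      t ∈ Set.extremePoints ℝ {u | MemAlice A B hn u.1 u.2} ↔
        (MemAlice A B hn t.1 t.2 ∧
          (∀ j x y, t.1 j x y = 0 ∨ t.1 j x y = 1) ∧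
          (∀ a x y, t.2 a x y = 0 ∨ t.2 a x y = 1))) := by
  classical
  constructor
  · intro p
    constructor
    · intro hext
      have hp : MemBob A B p := hext.1
      refine ⟨hp, ?_⟩
      by_contra hcon
      push_neg at hcon
      obtain ⟨j, x, y, h0, h1⟩ := hcon
      have hex : ∃ m : ℕ, ∃ (hm : m < n), ∃ x y, p ⟨m, hm⟩ x y ≠ 0 ∧ p ⟨m, hm⟩ x y ≠ 1 :=
        ⟨(j : ℕ), j.isLt, x, y, h0, h1⟩
      obtain ⟨hj0, x1, y1, g0, g1⟩ := Nat.find_spec hex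
      have hmin : ∀ k : Fin n, (k : ℕ) < Nat.find hex → ∀ x y, p k x y = 0 ∨ p k x y = 1 := by
        intro k hk x y
        by_contra hc
        push_neg at hc
        exact Nat.find_min hex hk ⟨k.isLt, x, y, hc.1, hc.2⟩
      exact bob_frac_not_extreme hp ⟨Nat.find hex, hj0⟩ hmin x1 y1 g0 g1 hext
    · rintro ⟨hp, h01⟩
      exact bob_bool_extreme hp h01
  · intro t
    constructor
    · intro hext
      have hm : MemAlice A B hn t.1 t.2 := hext.1
      have hsb : ∀ j x y, t.1 j x y = 0 ∨ t.1 j x y = 1 := by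
        by_contra hcon
        push_neg at hcon
        obtain ⟨j, x, y, h0, h1⟩ := hcon
        have hex : ∃ m : ℕ, ∃ (hm : m < n), ∃ x y,
            t.1 ⟨m, hm⟩ x y ≠ 0 ∧ t.1 ⟨m, hm⟩ x y ≠ 1 :=
          ⟨(j : ℕ), j.isLt, x, y, h0, h1⟩
        obtain ⟨hj0, x1, y1, g0, g1⟩ := Nat.find_spec hex
        have hmin : ∀ k : Fin n, (k : ℕ) < Nat.find hex → ∀ x y,
            t.1 k x y = 0 ∨ t.1 k x y = 1 := by
          intro k hk x y
          by_contra hc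
          push_neg at hc
          exact Nat.find_min hex hk ⟨k.isLt, x, y, hc.1, hc.2⟩
        exact aliceS_frac_not_extreme hm ⟨Nat.find hex, hj0⟩ hmin x1 y1 g0 g1 hext
      have hFb : ∀ a x y, t.2 a x y = 0 ∨ t.2 a x y = 1 := by
        by_contra hcon
        push_neg at hcon
        obtain ⟨a, x, y, h0, h1⟩ := hcon
        exact aliceF_frac_not_extreme hm hsb a x y h0 h1 hext
      exact ⟨hm, hsb, hFb⟩
    · rintro ⟨hm, h1, h2⟩
      exact alice_bool_extreme hm h1 h2


end BCCF
end

section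
/- For all probability distributions α₀, α₁ on A and β₀, β₁ on B and both c ∈ {0,1}, the classical cheating probabilities dominate the quantum ones: C_{A,c} ≥ P*_{A,c} and C_{B,c} ≥ P*_{B,c}. -/
open Finset

namespace BCCF

lemma fid_le_support_sum {ι : Type} [Fintype ι] (u v : ι → ℝ)
    (hu : ∀ i, 0 ≤ u i) (hv : ∀ i, 0 ≤ v i) (hv1 : ∑ i, v i ≤ 1) :
    fid u v ≤ ∑ i ∈ univ.filter (fun i => v i ≠ 0), u i := by
  classical
  set S := univ.filter (fun i => v i ≠ 0) with hS
  have h0 : ∑ i, Real.sqrt (u i * v i) = ∑ i ∈ S, Real.sqrt (u i) * Real.sqrt (v i) := by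
    rw [← Finset.sum_filter_of_ne (p := fun i => v i ≠ 0)]
    · exact Finset.sum_congr rfl fun i _ => Real.sqrt_mul (hu i) _
    · intro i _ h
      by_contra hvi
      simp [hvi, Real.sqrt_eq_zero'] at h
  have hcs' : (∑ i ∈ S, Real.sqrt (u i) * Real.sqrt (v i)) ^ 2 ≤
      (∑ i ∈ S, u i) * (∑ i ∈ S, v i) := by
    have := Finset.sum_mul_sq_le_sq_mul_sq S (fun i => Real.sqrt (u i))
        (fun i => Real.sqrt (v i))
    calc (∑ i ∈ S, Real.sqrt (u i) * Real.sqrt (v i)) ^ 2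
        ≤ (∑ i ∈ S, Real.sqrt (u i) ^ 2) * (∑ i ∈ S, Real.sqrt (v i) ^ 2) := this
      _ = (∑ i ∈ S, u i) * (∑ i ∈ S, v i) := by
          congr 1 <;> exact Finset.sum_congr rfl fun i _ => Real.sq_sqrt (by
            first | exact hu i | exact hv i)
  have hSu : 0 ≤ ∑ i ∈ S, u i := Finset.sum_nonneg fun i _ => hu i
  have hSv : ∑ i ∈ S, v i ≤ 1 :=
    le_trans (Finset.sum_le_sum_of_subset_of_nonneg (Finset.filter_subset _ _)
      (fun i _ _ => hv i)) hv1
  calc fid u v = (∑ i ∈ S, Real.sqrt (u i) * Real.sqrt (v i)) ^ 2 := by rw [fid, h0]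
    _ ≤ (∑ i ∈ S, u i) * (∑ i ∈ S, v i) := hcs'
    _ ≤ (∑ i ∈ S, u i) * 1 := by
        exact mul_le_mul_of_nonneg_left hSv hSu
    _ = ∑ i ∈ S, u i := mul_one _

theorem classical_dominates_quantum {n : ℕ} (hn : 0 < n) (A B : Fin n → Type)
    [∀ i, Fintype (A i)] [∀ i, Nonempty (A i)] [∀ i, Fintype (B i)] [∀ i, Nonempty (B i)]
    (α : Bool → ((i : Fin n) → A i) → ℝ) (β : Bool → ((i : Fin n) → B i) → ℝ)
    (hα : ∀ a, IsProbDist (α a)) (hβ : ∀ b, IsProbDist (β b))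
    (PA PB CA CB : Bool → ℝ)
    (hPA : ∀ c, IsGreatest (aliceValsQ A B hn α β c) (PA c))
    (hPB : ∀ c, IsGreatest (bobValsQ A B hn α β c) (PB c))
    (hCA : ∀ c, IsGreatest (aliceValsC A B hn α β c) (CA c))
    (hCB : ∀ c, IsGreatest (bobValsC A B hn α β c) (CB c)) :
    ∀ c, PA c ≤ CA c ∧ PB c ≤ CB c := by
  intro c
  constructor
  · -- Alice
    obtain ⟨⟨s, sF, hmem, hval⟩, -⟩ := hPA c
    have hle : aliceObjQ A B α β c sF ≤ aliceObjC A B α β c sF := by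
      unfold aliceObjQ aliceObjC
      apply mul_le_mul_of_nonneg_left _ (by norm_num)
      apply Finset.sum_le_sum
      intro a _
      apply Finset.sum_le_sum
      intro y _
      apply mul_le_mul_of_nonneg_left _ ((hβ (Bool.xor a c)).1 y)
      exact fid_le_support_sum _ _ (fun x => hmem.2.1 a x y) (hα a).1 (le_of_eq (hα a).2)
    calc PA c = aliceObjQ A B α β c sF := hval
      _ ≤ aliceObjC A B α β c sF := hle
      _ ≤ CA c := (hCA c).2 ⟨s, sF, hmem, rfl⟩
  · -- Bob
    obtain ⟨⟨p, hmem, hval⟩, -⟩ := hPB c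
    have hle : bobObjQ A B hn α β c p ≤ bobObjC A B hn α β c p := by
      unfold bobObjQ bobObjC
      apply mul_le_mul_of_nonneg_left _ (by norm_num)
      apply Finset.sum_le_sum
      intro a _
      exact fid_le_support_sum _ _
        (fun y => Finset.sum_nonneg fun x _ => mul_nonneg ((hα a).1 x) (hmem.1 _ x y))
        (hβ (Bool.xor a c)).1 (le_of_eq (hβ (Bool.xor a c)).2)
    calc PB c = bobObjQ A B hn α β c p := hval
      _ ≤ bobObjC A B hn α β c p := hle
      _ ≤ CB c := (hCB c).2 ⟨p, hmem, rfl⟩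

end BCCF
end

section
/- For all probability distributions α₀, α₁ on A and β₀, β₁ on B, cheating Alice's probabilities are bounded by (1/2) + (1/2)Δ(β₀,β₁): namely P*_{A,0} ≤ (1/2) + (1/2)Δ(β₀,β₁), P*_{A,1} ≤ (1/2) + (1/2)Δ(β₀,β₁), C_{A,0} ≤ (1/2) + (1/2)Δ(β₀,β₁), and C_{A,1} ≤ (1/2) + (1/2)Δ(β₀,β₁). -/
open Finset

namespace BCCF

lemma sum_update_eq {n : ℕ} (A : Fin n → Type) [∀ i, Fintype (A i)] (j : Fin n)
    (f : ((i : Fin n) → A i) → ℝ) (a : A j) :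
    ∑ x, f (Function.update x j a) =
      (Fintype.card (A j) : ℝ) *
        ∑ z : (i : {i // i ≠ j}) → A i, f ((Equiv.piSplitAt j A).symm (a, z)) := by
  rw [← Equiv.sum_comp (Equiv.piSplitAt j A).symm (fun x => f (Function.update x j a))]
  rw [Fintype.sum_prod_type]
  have hupd : ∀ (b : A j) (z : (i : {i // i ≠ j}) → A i),
      Function.update ((Equiv.piSplitAt j A).symm (b, z)) j a
        = (Equiv.piSplitAt j A).symm (a, z) := by
    intro b z
    funext i
    rcases eq_or_ne i j with h | h
    · subst h; simp [Equiv.piSplitAt]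
    · simp [Function.update, h, Equiv.piSplitAt]
  simp_rw [hupd]
  rw [Finset.sum_const, nsmul_eq_mul, Finset.card_univ]

lemma sum_sum_update {n : ℕ} (A : Fin n → Type) [∀ i, Fintype (A i)] (j : Fin n)
    (f : ((i : Fin n) → A i) → ℝ) :
    ∑ x, ∑ a : A j, f (Function.update x j a) = (Fintype.card (A j) : ℝ) * ∑ x, f x := by
  rw [Finset.sum_comm]
  simp_rw [sum_update_eq A j f]
  rw [← Finset.mul_sum]
  congr 1
  rw [← Equiv.sum_comp (Equiv.piSplitAt j A).symm f, Fintype.sum_prod_type]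

lemma sum_last {n : ℕ} (hn : 0 < n) (A B : Fin n → Type)
    [∀ i, Fintype (A i)] [∀ i, Nonempty (A i)] [∀ i, Fintype (B i)]
    (s : Fin n → ((i : Fin n) → A i) → ((i : Fin n) → B i) → ℝ)
    (hbase : ∀ j : Fin n, (j : ℕ) = 0 → ∀ x y,
      ∑ a : A j, s j (Function.update x j a) y = 1)
    (hrec : ∀ j k : Fin n, (j : ℕ) = (k : ℕ) + 1 → ∀ x y,
      ∑ a : A j, s j (Function.update x j a) y = s k x y)
    (y : (i : Fin n) → B i) :
    ∑ x, s ⟨n - 1, Nat.sub_lt hn Nat.one_pos⟩ x y = 1 := by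
  have main : ∀ m, ∀ h : m < n,
      (∏ i ∈ univ.filter (fun i : Fin n => (i : ℕ) ≤ m), (Fintype.card (A i) : ℝ)) *
        ∑ x, s ⟨m, h⟩ x y = (Fintype.card ((i : Fin n) → A i) : ℝ) := by
    intro m
    induction m with
    | zero =>
      intro h
      have h1 : (univ.filter (fun i : Fin n => (i : ℕ) ≤ 0)) = {(⟨0, h⟩ : Fin n)} := by
        ext i
        simp only [mem_filter, mem_univ, true_and, mem_singleton, Fin.ext_iff]
        omega
      rw [h1, Finset.prod_singleton]
      have h2 := sum_sum_update A ⟨0, h⟩ (fun x => s ⟨0, h⟩ x y)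
      rw [← h2]
      have h3 : ∀ x : (i : Fin n) → A i,
          ∑ a : A (⟨0, h⟩ : Fin n), s ⟨0, h⟩ (Function.update x ⟨0, h⟩ a) y = 1 :=
        fun x => hbase ⟨0, h⟩ rfl x y
      simp_rw [h3]
      simp
    | succ m ih =>
      intro h
      have hm : m < n := Nat.lt_of_succ_lt h
      have hsplit : (univ.filter (fun i : Fin n => (i : ℕ) ≤ m + 1))
          = insert (⟨m + 1, h⟩ : Fin n) (univ.filter (fun i : Fin n => (i : ℕ) ≤ m)) := by
        ext i
        simp only [mem_filter, mem_univ, true_and, mem_insert, Fin.ext_iff]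
        omega
      have hnotmem : (⟨m + 1, h⟩ : Fin n) ∉ univ.filter (fun i : Fin n => (i : ℕ) ≤ m) := by
        simp
      rw [hsplit, Finset.prod_insert hnotmem]
      have h2 := sum_sum_update A ⟨m + 1, h⟩ (fun x => s ⟨m + 1, h⟩ x y)
      have h3 : ∀ x : (i : Fin n) → A i,
          ∑ a : A (⟨m + 1, h⟩ : Fin n), s ⟨m + 1, h⟩ (Function.update x ⟨m + 1, h⟩ a) y
            = s ⟨m, hm⟩ x y := fun x => hrec ⟨m + 1, h⟩ ⟨m, hm⟩ rfl x y
      simp_rw [h3] at h2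
      rw [mul_assoc, mul_left_comm, ← h2]
      exact ih hm
  have hfin := main (n - 1) (Nat.sub_lt hn Nat.one_pos)
  have huniv : (univ.filter (fun i : Fin n => (i : ℕ) ≤ n - 1)) = univ := by
    ext i; simp; omega
  rw [huniv] at hfin
  have hcard : (Fintype.card ((i : Fin n) → A i) : ℝ) = ∏ i, (Fintype.card (A i) : ℝ) := by
    rw [Fintype.card_pi]; push_cast; rfl
  rw [hcard] at hfin
  have hne : (∏ i, (Fintype.card (A i) : ℝ)) ≠ 0 := by
    apply Finset.prod_ne_zero_iff.2
    intro i _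
    exact_mod_cast (Fintype.card_pos (α := A i)).ne'
  nlinarith [hfin, hne, mul_left_cancel₀ hne (by rw [hfin, mul_one] : (∏ i, (Fintype.card (A i) : ℝ)) * (∑ x, s ⟨n-1, Nat.sub_lt hn Nat.one_pos⟩ x y) = (∏ i, (Fintype.card (A i) : ℝ)) * 1)]


lemma fid_le_sum_mul_sum {ι : Type} [Fintype ι] {u v : ι → ℝ}
    (hu : ∀ i, 0 ≤ u i) (hv : ∀ i, 0 ≤ v i) :
    fid u v ≤ (∑ i, u i) * (∑ i, v i) := by
  unfold fid
  have h : ∀ i ∈ (univ : Finset ι), Real.sqrt (u i * v i)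
      = Real.sqrt (u i) * Real.sqrt (v i) := fun i _ => Real.sqrt_mul (hu i) _
  rw [Finset.sum_congr rfl h]
  calc (∑ i, Real.sqrt (u i) * Real.sqrt (v i)) ^ 2
      ≤ (∑ i, Real.sqrt (u i) ^ 2) * (∑ i, Real.sqrt (v i) ^ 2) :=
        Finset.sum_mul_sq_le_sq_mul_sq _ _ _
    _ = (∑ i, u i) * (∑ i, v i) := by
        rw [Finset.sum_congr rfl fun i _ => Real.sq_sqrt (hu i),
          Finset.sum_congr rfl fun i _ => Real.sq_sqrt (hv i)]

lemma sum_max_eq {ι : Type} [Fintype ι] (β : Bool → ι → ℝ) (hβ : ∀ b, IsProbDist (β b)) :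
    ∑ y, max (β false y) (β true y) = 1 + tdist (β false) (β true) := by
  have h : ∀ y ∈ (univ : Finset ι), max (β false y) (β true y)
      = (β false y + β true y + |β false y - β true y|) / 2 := by
    intro y _
    rcases le_total (β false y) (β true y) with h | h
    · rw [max_eq_right h, abs_of_nonpos (by linarith)]; ring
    · rw [max_eq_left h, abs_of_nonneg (by linarith)]; ring
  rw [Finset.sum_congr rfl h]
  have h1 := (hβ false).2
  have h2 := (hβ true).2
  unfold tdist
  rw [← Finset.sum_div]
  rw [Finset.sum_add_distrib, Finset.sum_add_distrib, h1, h2]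
  ring

lemma main_bound {Y : Type} [Fintype Y] (β : Bool → Y → ℝ) (hβ : ∀ b, IsProbDist (β b))
    (c : Bool) (g t : Bool → Y → ℝ) (hg : ∀ a y, 0 ≤ g a y)
    (hgt : ∀ a y, g a y ≤ t a y) (hsum : ∀ y, t false y + t true y = 1) :
    (1 / 2) * ∑ a : Bool, ∑ y, β (Bool.xor a c) y * g a y
      ≤ 1 / 2 + (1 / 2) * tdist (β false) (β true) := by
  have hM : ∀ (a : Bool) (y : Y), β (Bool.xor a c) y * g a y
      ≤ max (β false y) (β true y) * t a y := by
    intro a y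
    refine mul_le_mul ?_ (hgt a y) (hg a y)
      (le_trans ((hβ false).1 y) (le_max_left _ _))
    cases Bool.xor a c
    · exact le_max_left _ _
    · exact le_max_right _ _
  have h1 : ∑ a : Bool, ∑ y, β (Bool.xor a c) y * g a y
      ≤ ∑ a : Bool, ∑ y, max (β false y) (β true y) * t a y :=
    Finset.sum_le_sum fun a _ => Finset.sum_le_sum fun y _ => hM a y
  have h2 : ∑ a : Bool, ∑ y, max (β false y) (β true y) * t a y
      = 1 + tdist (β false) (β true) := by
    rw [Fintype.sum_bool, ← Finset.sum_add_distrib]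
    have h3 : ∀ y ∈ (univ : Finset Y), max (β false y) (β true y) * t true y
        + max (β false y) (β true y) * t false y = max (β false y) (β true y) := by
      intro y _
      rw [← mul_add, add_comm (t true y), hsum y, mul_one]
    rw [Finset.sum_congr rfl h3]
    exact sum_max_eq β hβ
  linarith

lemma alice_strategy_sum {n : ℕ} (hn : 0 < n) (A B : Fin n → Type)
    [∀ i, Fintype (A i)] [∀ i, Nonempty (A i)] [∀ i, Fintype (B i)]
    (s : Fin n → ((i : Fin n) → A i) → ((i : Fin n) → B i) → ℝ)
    (sF : Bool → ((i : Fin n) → A i) → ((i : Fin n) → B i) → ℝ)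
    (hmem : MemAlice A B hn s sF) (y : (i : Fin n) → B i) :
    (∑ x, sF false x y) + (∑ x, sF true x y) = 1 := by
  obtain ⟨hs, hsF, _, hbase, hrec, hsplit⟩ := hmem
  rw [← Finset.sum_add_distrib]
  rw [Finset.sum_congr rfl fun x _ => hsplit x y]
  exact sum_last hn A B s hbase hrec y

lemma aliceObjQ_le {n : ℕ} (hn : 0 < n) (A B : Fin n → Type)
    [∀ i, Fintype (A i)] [∀ i, Nonempty (A i)] [∀ i, Fintype (B i)]
    (α : Bool → ((i : Fin n) → A i) → ℝ) (β : Bool → ((i : Fin n) → B i) → ℝ)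
    (hα : ∀ a, IsProbDist (α a)) (hβ : ∀ b, IsProbDist (β b)) (c : Bool)
    (s : Fin n → ((i : Fin n) → A i) → ((i : Fin n) → B i) → ℝ)
    (sF : Bool → ((i : Fin n) → A i) → ((i : Fin n) → B i) → ℝ)
    (hmem : MemAlice A B hn s sF) :
    aliceObjQ A B α β c sF ≤ 1 / 2 + (1 / 2) * tdist (β false) (β true) := by
  unfold aliceObjQ
  refine main_bound β hβ c (fun a y => fid (fun x => sF a x y) (α a))
    (fun a y => ∑ x, sF a x y) (fun a y => sq_nonneg _) ?_
    (alice_strategy_sum hn A B s sF hmem)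
  intro a y
  have := fid_le_sum_mul_sum (u := fun x => sF a x y) (v := α a)
    (fun x => hmem.2.1 a x y) ((hα a).1)
  rwa [(hα a).2, mul_one] at this

lemma aliceObjC_le {n : ℕ} (hn : 0 < n) (A B : Fin n → Type)
    [∀ i, Fintype (A i)] [∀ i, Nonempty (A i)] [∀ i, Fintype (B i)]
    (α : Bool → ((i : Fin n) → A i) → ℝ) (β : Bool → ((i : Fin n) → B i) → ℝ)
    (hβ : ∀ b, IsProbDist (β b)) (c : Bool)
    (s : Fin n → ((i : Fin n) → A i) → ((i : Fin n) → B i) → ℝ)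
    (sF : Bool → ((i : Fin n) → A i) → ((i : Fin n) → B i) → ℝ)
    (hmem : MemAlice A B hn s sF) :
    aliceObjC A B α β c sF ≤ 1 / 2 + (1 / 2) * tdist (β false) (β true) := by
  unfold aliceObjC
  refine main_bound β hβ c
    (fun a y => ∑ x ∈ univ.filter (fun x => α a x ≠ 0), sF a x y)
    (fun a y => ∑ x, sF a x y)
    (fun a y => Finset.sum_nonneg fun x _ => hmem.2.1 a x y) ?_
    (alice_strategy_sum hn A B s sF hmem)
  intro a y
  exact Finset.sum_le_sum_of_subset_of_nonneg (Finset.filter_subset _ _)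
    (fun x _ _ => hmem.2.1 a x y)

theorem alice_cheating_bound {n : ℕ} (hn : 0 < n) (A B : Fin n → Type)
    [∀ i, Fintype (A i)] [∀ i, Nonempty (A i)] [∀ i, Fintype (B i)] [∀ i, Nonempty (B i)]
    (α : Bool → ((i : Fin n) → A i) → ℝ) (β : Bool → ((i : Fin n) → B i) → ℝ)
    (hα : ∀ a, IsProbDist (α a)) (hβ : ∀ b, IsProbDist (β b))
    (PA CA : Bool → ℝ)
    (hPA : ∀ c, IsGreatest (aliceValsQ A B hn α β c) (PA c))
    (hCA : ∀ c, IsGreatest (aliceValsC A B hn α β c) (CA c)) :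
    PA false ≤ 1 / 2 + (1 / 2) * tdist (β false) (β true) ∧
    PA true ≤ 1 / 2 + (1 / 2) * tdist (β false) (β true) ∧
    CA false ≤ 1 / 2 + (1 / 2) * tdist (β false) (β true) ∧
    CA true ≤ 1 / 2 + (1 / 2) * tdist (β false) (β true) := by
  have hQ : ∀ c, PA c ≤ 1 / 2 + (1 / 2) * tdist (β false) (β true) := by
    intro c
    obtain ⟨s, sF, hmem, hval⟩ := (hPA c).1
    rw [hval]
    exact aliceObjQ_le hn A B α β hα hβ c s sF hmem
  have hC : ∀ c, CA c ≤ 1 / 2 + (1 / 2) * tdist (β false) (β true) := by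
    intro c
    obtain ⟨s, sF, hmem, hval⟩ := (hCA c).1
    rw [hval]
    exact aliceObjC_le hn A B α β hβ c s sF hmem
  exact ⟨hQ false, hQ true, hC false, hC true⟩


end BCCF
end
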